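/- arXiv:1901.01584 — 9 statements merged into one kernel-verified Lean document; each statement's English description precedes it below -/
import Mathlib

section
/- For any arithmetic function F : ℕ → ℂ with Eratosthenes transform F' = F ∗ μ (Dirichlet convolution with the Möbius function), and any Q ∈ ℕ, for all a ∈ ℕ one has ∑_{d | a, d Q-smooth} F'(d) = ∑_{t | a, t Q-smooth, (a/t) Q-sifted} F(t), where a positive integer is Q-smooth if all its prime factors are ≤ Q, and Q-sifted if it is coprime to every prime ≤ Q. -/
open scoped BigOperators
open ArithmeticFunction

/-- `n` is `Q`-smooth: every prime factor of `n` is `≤ Q`. -/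
def QSmooth (Q n : ℕ) : Prop := ∀ p ∈ n.primeFactors, p ≤ Q
instance (Q n : ℕ) : Decidable (QSmooth Q n) := by unfold QSmooth; infer_instance
/-- `n` is `Q`-sifted: coprime to every prime `≤ Q`. -/
def QSifted (Q n : ℕ) : Prop := ∀ p ∈ n.primeFactors, Q < p
instance (Q n : ℕ) : Decidable (QSifted Q n) := by unfold QSifted; infer_instance
/-- Eratosthenes transform `F' = F ∗ μ`. -/
noncomputable def era (F : ℕ → ℂ) (d : ℕ) : ℂ :=
  ∑ t ∈ d.divisors, F t * (moebius (d / t) : ℤ)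
/-- Ramanujan sum `c_q(n) = ∑_{d ∣ (q,n)} d μ(q/d)`. -/
def ramanujanSum (q n : ℕ) : ℤ :=
  ∑ d ∈ (Nat.gcd q n).divisors, (d : ℤ) * moebius (q / d)


/-!
Restricting to `Q`-smooth numbers commutes with Dirichlet convolution, since a product of
nonzero numbers is `Q`-smooth iff both factors are. So the left side is
`∑_{t ∣ a, t Q-smooth} F(t) ∑_{m ∣ a/t, m Q-smooth} μ(m)`. The squarefree `Q`-smooth divisors
of `n` are exactly the divisors of `s = ∏_{p ∣ n, p ≤ Q} p`, so the inner sum is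
`∑_{m ∣ s} μ(m) = [s = 1] = [a/t is Q-sifted]`.
-/

open Finset

theorem Squarefree.dvd_iff_primeFactors_subset {m k : ℕ} (hm : Squarefree m) (hk : k ≠ 0) :
    m ∣ k ↔ m.primeFactors ⊆ k.primeFactors := by
  simpa [Nat.prod_primeFactors_of_squarefree hm] using Nat.prod_primeFactors_dvd_iff (n := m) hk

namespace Nat

theorem sum_divisors_sum_divisors_div {M : Type*} [AddCommMonoid M] (a : ℕ) (f : ℕ → ℕ → M) :
    ∑ d ∈ a.divisors, ∑ t ∈ d.divisors, f t (d / t) =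
      ∑ t ∈ a.divisors, ∑ m ∈ (a / t).divisors, f t m := by
  rw [sum_comm' (t' := a.divisors) (s' := fun t => {d ∈ a.divisors | t ∣ d})]
  · refine sum_congr rfl fun t ht => ?_
    have ht0 : t ≠ 0 := (pos_of_mem_divisors ht).ne'
    refine sum_nbij' (· / t) (t * ·) (fun d hd => ?_) (fun m hm => ?_) (fun d hd => ?_)
      (fun m _ => ?_) (fun _ _ => rfl)
    · obtain ⟨⟨hda, ha⟩, htd⟩ : (d ∣ a ∧ a ≠ 0) ∧ t ∣ d := by simpa using hd
      exact mem_divisors.2 ⟨div_dvd_div htd hda,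
        ne_zero_of_dvd_ne_zero ha (div_dvd_of_dvd (htd.trans hda))⟩
    · exact mem_filter.2 ⟨mem_divisors.2 ⟨mul_dvd_of_dvd_div (dvd_of_mem_divisors ht)
        (dvd_of_mem_divisors hm), (mem_divisors.1 ht).2⟩, dvd_mul_right t m⟩
    · exact Nat.mul_div_cancel' (mem_filter.1 hd).2
    · simp [ht0]
  · intro d t
    simp only [mem_divisors, mem_filter]
    constructor
    · rintro ⟨⟨hda, ha⟩, htd, -⟩
      exact ⟨⟨⟨hda, ha⟩, htd⟩, htd.trans hda, ha⟩
    · rintro ⟨⟨⟨hda, ha⟩, htd⟩, -⟩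
      exact ⟨⟨hda, ha⟩, htd, ne_zero_of_dvd_ne_zero ha hda⟩

theorem sum_moebius_divisors_filter_primeFactors {n : ℕ} (hn : n ≠ 0) (P : ℕ → Prop)
    [DecidablePred P] :
    ∑ m ∈ n.divisors with ∀ p ∈ m.primeFactors, P p, moebius m =
      if ∀ p ∈ n.primeFactors, ¬ P p then 1 else 0 := by
  set s := ∏ p ∈ n.primeFactors with P p, p
  have hs : s.primeFactors = {p ∈ n.primeFactors | P p} :=
    primeFactors_prod fun p hp => prime_of_mem_primeFactors (mem_filter.1 hp).1
  have hs0 : s ≠ 0 :=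
    prod_ne_zero_iff.2 fun p hp => (prime_of_mem_primeFactors (mem_filter.1 hp).1).ne_zero
  have hsn : s ∣ n :=
    (prod_dvd_prod_of_subset _ _ _ (filter_subset _ _)).trans (prod_primeFactors_dvd n)
  have hsub : s.divisors ⊆ {m ∈ n.divisors | ∀ p ∈ m.primeFactors, P p} := by
    intro m hm
    have hms := dvd_of_mem_divisors hm
    refine mem_filter.2 ⟨mem_divisors.2 ⟨hms.trans hsn, hn⟩, fun p hp => ?_⟩
    have hp' := primeFactors_mono hms hs0 hp
    rw [hs] at hp'
    exact (mem_filter.1 hp').2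
  have hzero : ∀ m ∈ {m ∈ n.divisors | ∀ p ∈ m.primeFactors, P p}, m ∉ s.divisors →
      moebius m = 0 := by
    intro m hm hms
    obtain ⟨hmn, hmP⟩ := mem_filter.1 hm
    refine moebius_eq_zero_of_not_squarefree fun hsq => hms (mem_divisors.2 ⟨?_, hs0⟩)
    rw [hsq.dvd_iff_primeFactors_subset hs0, hs]
    exact fun p hp => mem_filter.2 ⟨primeFactors_mono (dvd_of_mem_divisors hmn) hn hp, hmP p hp⟩
  have hs1 : s = 1 ↔ ∀ p ∈ n.primeFactors, ¬ P p := by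
    rw [← filter_eq_empty_iff, ← hs, primeFactors_eq_empty]
    simp [hs0]
  rw [← sum_subset hsub hzero, ← coe_mul_zeta_apply, moebius_mul_coe_zeta, one_apply]
  simp only [hs1]

end Nat

theorem qSmooth_mul_iff {Q m n : ℕ} (hm : m ≠ 0) (hn : n ≠ 0) :
    QSmooth Q (m * n) ↔ QSmooth Q m ∧ QSmooth Q n := by
  simp only [QSmooth, Nat.primeFactors_mul hm hn, mem_union, or_imp, forall_and]

theorem qSmooth_iff_of_dvd {Q t d : ℕ} (htd : t ∣ d) (hd : d ≠ 0) :
    QSmooth Q d ↔ QSmooth Q t ∧ QSmooth Q (d / t) := by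
  obtain ⟨m, rfl⟩ := htd
  rcases mul_ne_zero_iff.1 hd with ⟨ht, hm⟩
  rw [Nat.mul_div_cancel_left m (Nat.pos_of_ne_zero ht), qSmooth_mul_iff ht hm]

theorem sum_moebius_divisors_filter_qSmooth {Q n : ℕ} (hn : n ≠ 0) :
    ∑ m ∈ n.divisors with QSmooth Q m, moebius m = if QSifted Q n then 1 else 0 := by
  convert Nat.sum_moebius_divisors_filter_primeFactors hn (· ≤ Q) using 2
  · rfl
  · simp only [QSifted, not_le]

theorem ite_qSmooth_era_eq_sum (F : ℕ → ℂ) {Q d : ℕ} (hd : d ≠ 0) :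
    (if QSmooth Q d then era F d else 0) =
      ∑ t ∈ d.divisors, (if QSmooth Q t then F t else 0) *
        (if QSmooth Q (d / t) then (moebius (d / t) : ℂ) else 0) := by
  have hterm : ∀ t ∈ d.divisors, (if QSmooth Q t then F t else 0) *
      (if QSmooth Q (d / t) then (moebius (d / t) : ℂ) else 0) =
        if QSmooth Q d then F t * moebius (d / t) else 0 := fun t ht => by
    simp only [ite_zero_mul_ite_zero, ← qSmooth_iff_of_dvd (Nat.dvd_of_mem_divisors ht) hd]
  rw [sum_congr rfl hterm, sum_ite_irrel, sum_const_zero, era]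

theorem sum_divisors_qSmooth_mul_moebius (F : ℕ → ℂ) {Q t n : ℕ} (hn : n ≠ 0) :
    ∑ m ∈ n.divisors, (if QSmooth Q t then F t else 0) *
        (if QSmooth Q m then (moebius m : ℂ) else 0) =
      if QSmooth Q t ∧ QSifted Q n then F t else 0 := by
  rw [← mul_sum, ← sum_filter, ← Int.cast_sum, sum_moebius_divisors_filter_qSmooth hn]
  split_ifs <;> simp_all

theorem moebius_switch_general (F : ℕ → ℂ) (Q : ℕ) (a : ℕ) :
    ∑ d ∈ a.divisors.filter (fun d => QSmooth Q d), era F d =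
      ∑ t ∈ a.divisors.filter (fun t => QSmooth Q t ∧ QSifted Q (a / t)), F t := by
  calc ∑ d ∈ a.divisors.filter (fun d => QSmooth Q d), era F d
      = ∑ d ∈ a.divisors, ∑ t ∈ d.divisors, (if QSmooth Q t then F t else 0) *
          (if QSmooth Q (d / t) then (moebius (d / t) : ℂ) else 0) := by
        rw [sum_filter]
        exact sum_congr rfl fun d hd => ite_qSmooth_era_eq_sum F (Nat.pos_of_mem_divisors hd).ne'
    _ = ∑ t ∈ a.divisors, ∑ m ∈ (a / t).divisors, (if QSmooth Q t then F t else 0) *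
          (if QSmooth Q m then (moebius m : ℂ) else 0) :=
        Nat.sum_divisors_sum_divisors_div a fun t m =>
          (if QSmooth Q t then F t else 0) * (if QSmooth Q m then (moebius m : ℂ) else 0)
    _ = ∑ t ∈ a.divisors.filter (fun t => QSmooth Q t ∧ QSifted Q (a / t)), F t := by
        rw [sum_filter]
        refine sum_congr rfl fun t ht => ?_
        obtain ⟨hta, ha⟩ := Nat.mem_divisors.1 ht
        have hat : a / t ≠ 0 := ne_zero_of_dvd_ne_zero ha (Nat.div_dvd_of_dvd hta)
        exact sum_divisors_qSmooth_mul_moebius F hat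

/-- Möbius switch (Lemma 1): for any `F : ℕ → ℂ`, with `F' = F ∗ μ`,
`∑_{d ∣ a, d Q-smooth} F'(d) = ∑_{t ∣ a, t Q-smooth, (a/t) Q-sifted} F(t)`. -/
theorem moebius_switch (F : ℕ → ℂ) (Q : ℕ) (a : ℕ) (ha : 0 < a) :
    ∑ d ∈ a.divisors.filter (fun d => QSmooth Q d), era F d =
      ∑ t ∈ a.divisors.filter (fun t => QSmooth Q t ∧ QSifted Q (a / t)), F t :=
  moebius_switch_general F Q a
end

section
/- Let q, ℓ be Q-smooth positive integers. Then ∏_{p ≤ Q}(1 − 1/p) · ∑_{t Q-smooth} c_q(t) c_ℓ(t) / t = φ(ℓ) if q = ℓ and 0 otherwise, where the sum converges absolutely (smooth-twisted orthogonality of Ramanujan sums). -/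
open scoped BigOperators
open ArithmeticFunction

lemma sum_moebius_divisors_filter (n r : ℕ) (hn : 0 < n) :
    ∑ e ∈ n.divisors, (if r ∣ e then ((moebius (n / e) : ℤ) : ℝ) else 0)
      = if r = n then 1 else 0 := by
  by_cases hr : r ∣ n
  · have h1 : ∑ e ∈ n.divisors, (if r ∣ e then ((moebius (n / e) : ℤ) : ℝ) else 0)
        = ∑ d ∈ n.divisors, (if r ∣ n / d then ((moebius (n / (n / d)) : ℤ) : ℝ) else 0) :=
      (Nat.sum_div_divisors n (fun e => if r ∣ e then ((moebius (n / e) : ℤ) : ℝ) else 0)).symm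
    rw [h1]
    have h2 : ∀ d ∈ n.divisors, (if r ∣ n / d then ((moebius (n / (n / d)) : ℤ) : ℝ) else 0)
        = (if d ∣ n / r then ((moebius d : ℤ) : ℝ) else 0) := by
      intro d hd
      rw [Nat.mem_divisors] at hd
      rw [Nat.div_div_self hd.1 hd.2]
      congr 1
      rw [Nat.dvd_div_iff_mul_dvd hd.1, Nat.dvd_div_iff_mul_dvd hr, mul_comm]
    rw [Finset.sum_congr rfl h2, ← Finset.sum_filter,
      Nat.divisors_filter_dvd_of_dvd hn.ne' (Nat.div_dvd_of_dvd hr)]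
    have h3 : ∑ d ∈ (n / r).divisors, ((moebius d : ℤ) : ℝ)
        = (((moebius * (zeta : ArithmeticFunction ℤ)) (n / r) : ℤ) : ℝ) := by
      rw [ArithmeticFunction.coe_mul_zeta_apply]
      push_cast
      ring
    rw [h3, moebius_mul_coe_zeta]
    have h4 : (n / r = 1) ↔ r = n := by
      constructor
      · intro h
        have := Nat.eq_mul_of_div_eq_right hr h
        omega
      · rintro rfl; exact Nat.div_self hn
    by_cases h : r = n
    · simp [h, Nat.div_self hn]
    · have : n / r ≠ 1 := fun hc => h (h4.mp hc)
      simp [h, ArithmeticFunction.one_apply, this]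
  · have : ∀ e ∈ n.divisors, (if r ∣ e then ((moebius (n / e) : ℤ) : ℝ) else 0) = 0 := by
      intro e he
      rw [Nat.mem_divisors] at he
      have : ¬ r ∣ e := fun h => hr (h.trans he.1)
      simp [this]
    rw [Finset.sum_congr rfl this, Finset.sum_const_zero]
    have : r ≠ n := fun h => hr (h ▸ dvd_refl n)
    simp [this]

lemma finite_orth (q ℓ : ℕ) (hq : 0 < q) (hℓ : 0 < ℓ) :
    ∑ d ∈ q.divisors, ∑ e ∈ ℓ.divisors,
      ((moebius (q / d) : ℤ) : ℝ) * ((moebius (ℓ / e) : ℤ) : ℝ) * (Nat.gcd d e : ℝ)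
    = if q = ℓ then (Nat.totient ℓ : ℝ) else 0 := by
  have hgcd : ∀ d ∈ q.divisors, ∀ e ∈ ℓ.divisors,
      (Nat.gcd d e : ℝ) = ∑ r ∈ q.divisors,
        (if r ∣ d ∧ r ∣ e then (Nat.totient r : ℝ) else 0) := by
    intro d hd e he
    rw [Nat.mem_divisors] at hd he
    have hd0 : 0 < d := Nat.pos_of_dvd_of_pos hd.1 hq
    have hfil : q.divisors.filter (fun r => r ∣ d ∧ r ∣ e) = (Nat.gcd d e).divisors := by
      ext r
      simp only [Finset.mem_filter, Nat.mem_divisors, Nat.dvd_gcd_iff]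
      constructor
      · rintro ⟨⟨_, _⟩, h2, h3⟩
        exact ⟨⟨h2, h3⟩, Nat.gcd_ne_zero_left hd0.ne'⟩
      · rintro ⟨⟨h2, h3⟩, _⟩
        exact ⟨⟨h2.trans hd.1, hq.ne'⟩, h2, h3⟩
    rw [← Finset.sum_filter, hfil]
    rw [← Nat.cast_sum]
    norm_cast
    exact (Nat.sum_totient _).symm
  calc ∑ d ∈ q.divisors, ∑ e ∈ ℓ.divisors,
        ((moebius (q / d) : ℤ) : ℝ) * ((moebius (ℓ / e) : ℤ) : ℝ) * (Nat.gcd d e : ℝ)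
      = ∑ d ∈ q.divisors, ∑ e ∈ ℓ.divisors, ∑ r ∈ q.divisors,
          (Nat.totient r : ℝ) * (if r ∣ d then ((moebius (q / d) : ℤ) : ℝ) else 0)
            * (if r ∣ e then ((moebius (ℓ / e) : ℤ) : ℝ) else 0) := by
        refine Finset.sum_congr rfl fun d hd => Finset.sum_congr rfl fun e he => ?_
        rw [hgcd d hd e he, Finset.mul_sum]
        refine Finset.sum_congr rfl fun r _ => ?_
        by_cases h1 : r ∣ d <;> by_cases h2 : r ∣ e <;> simp [h1, h2] <;> ring
    _ = ∑ r ∈ q.divisors,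
          (Nat.totient r : ℝ)
            * (∑ d ∈ q.divisors, if r ∣ d then ((moebius (q / d) : ℤ) : ℝ) else 0)
            * (∑ e ∈ ℓ.divisors, if r ∣ e then ((moebius (ℓ / e) : ℤ) : ℝ) else 0) := by
        rw [show (∑ d ∈ q.divisors, ∑ e ∈ ℓ.divisors, ∑ r ∈ q.divisors,
            (Nat.totient r : ℝ) * (if r ∣ d then ((moebius (q / d) : ℤ) : ℝ) else 0)
              * (if r ∣ e then ((moebius (ℓ / e) : ℤ) : ℝ) else 0))
            = ∑ d ∈ q.divisors, ∑ r ∈ q.divisors, ∑ e ∈ ℓ.divisors,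
            (Nat.totient r : ℝ) * (if r ∣ d then ((moebius (q / d) : ℤ) : ℝ) else 0)
              * (if r ∣ e then ((moebius (ℓ / e) : ℤ) : ℝ) else 0)
            from Finset.sum_congr rfl fun d _ => Finset.sum_comm, Finset.sum_comm]
        refine Finset.sum_congr rfl fun r _ => ?_
        rw [← Finset.sum_mul_sum, ← Finset.mul_sum, mul_assoc]
    _ = ∑ r ∈ q.divisors,
          (Nat.totient r : ℝ) * (if r = q then 1 else 0) * (if r = ℓ then 1 else 0) := by
        refine Finset.sum_congr rfl fun r _ => ?_
        rw [sum_moebius_divisors_filter q r hq, sum_moebius_divisors_filter ℓ r hℓ]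
    _ = if q = ℓ then (Nat.totient ℓ : ℝ) else 0 := by
        rw [Finset.sum_eq_single q]
        · by_cases h : q = ℓ <;> simp [h]
        · intro r _ hr; simp [hr]
        · intro h; exact absurd (Nat.mem_divisors_self q hq.ne') h

section analytic
variable (Q : ℕ)

/-- The inverse monoid hom. -/
noncomputable def invHom : ℕ →* ℝ where
  toFun n := ((n : ℝ))⁻¹
  map_one' := by norm_num
  map_mul' m n := by push_cast; exact mul_inv _ _

lemma invHom_norm_lt {p : ℕ} (hp : p.Prime) : ‖invHom p‖ < 1 := by
  have h1 : (1 : ℝ) < p := by exact_mod_cast hp.one_lt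
  rw [invHom, MonoidHom.coe_mk, OneHom.coe_mk, Real.norm_eq_abs, abs_inv,
    abs_of_nonneg (by positivity)]
  rw [inv_lt_one_iff₀]
  right; exact h1

lemma qsmooth_iff (t : ℕ) : (0 < t ∧ QSmooth Q t) ↔ t ∈ Nat.smoothNumbers (Q + 1) := by
  rw [Nat.mem_smoothNumbers]
  constructor
  · rintro ⟨ht, hs⟩
    refine ⟨ht.ne', fun p hp => Nat.lt_succ_of_le (hs p ?_)⟩
    rw [Nat.mem_primeFactors]
    rw [Nat.mem_primeFactorsList ht.ne'] at hp
    exact ⟨hp.1, hp.2, ht.ne'⟩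
  · rintro ⟨ht, hs⟩
    refine ⟨Nat.pos_of_ne_zero ht, fun p hp => ?_⟩
    rw [Nat.mem_primeFactors] at hp
    exact Nat.lt_succ_iff.mp (hs p ((Nat.mem_primeFactorsList ht).mpr ⟨hp.1, hp.2.1⟩))

noncomputable def eqv : {t : ℕ // 0 < t ∧ QSmooth Q t} ≃ (Nat.smoothNumbers (Q + 1)) :=
  Equiv.subtypeEquivRight (qsmooth_iff Q)

lemma inv_summable : Summable (fun t : {t : ℕ // 0 < t ∧ QSmooth Q t} => ((t : ℕ) : ℝ)⁻¹) := by
  have h := (EulerProduct.summable_and_hasSum_smoothNumbers_prod_primesBelow_geometric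
    (f := invHom) (fun {p} hp => invHom_norm_lt hp) (Q + 1)).1
  have h2 : Summable (fun m : (Nat.smoothNumbers (Q + 1)) => invHom (m : ℕ)) :=
    h.of_norm
  exact (Equiv.summable_iff (eqv Q)).mpr h2

lemma inv_tsum_eq : (∑' t : {t : ℕ // 0 < t ∧ QSmooth Q t}, ((t : ℕ) : ℝ)⁻¹)
    = ∏ p ∈ (Q + 1).primesBelow, (1 - ((p : ℕ) : ℝ)⁻¹)⁻¹ := by
  have h := (EulerProduct.summable_and_hasSum_smoothNumbers_prod_primesBelow_geometric
    (f := invHom) (fun {p} hp => invHom_norm_lt hp) (Q + 1)).2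
  have he := Equiv.tsum_eq (eqv Q) (fun m : (Nat.smoothNumbers (Q + 1)) => invHom (m : ℕ))
  exact he.trans h.tsum_eq

lemma prod_mul_tsum_inv : (∏ p ∈ (Finset.range (Q + 1)).filter Nat.Prime, (1 - 1 / (p : ℝ))) *
    (∑' t : {t : ℕ // 0 < t ∧ QSmooth Q t}, ((t : ℕ) : ℝ)⁻¹) = 1 := by
  rw [inv_tsum_eq]
  have : (Q + 1).primesBelow = (Finset.range (Q + 1)).filter Nat.Prime := rfl
  rw [← this, ← Finset.prod_mul_distrib]
  refine Finset.prod_eq_one fun p hp => ?_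
  have hp' : p.Prime := (Nat.mem_primesBelow.mp hp).2
  have h1 : (1 : ℝ) < p := by exact_mod_cast hp'.one_lt
  have h2 : (1 : ℝ) - (p : ℝ)⁻¹ ≠ 0 := by
    have : (p : ℝ)⁻¹ < 1 := by rw [inv_lt_one_iff₀]; right; exact h1
    linarith
  rw [one_div]
  exact mul_inv_cancel₀ h2

end analytic

section more
variable (Q : ℕ)

lemma summable_of_bound (g : {t : ℕ // 0 < t ∧ QSmooth Q t} → ℝ) (C : ℝ)
    (h : ∀ t, |g t| ≤ C * ((t : ℕ) : ℝ)⁻¹) : Summable g := by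
  refine Summable.of_norm_bounded ((inv_summable Q).mul_left C) fun t => ?_
  rw [Real.norm_eq_abs]; exact h t

lemma qsmooth_of_dvd {m n : ℕ} (hn : n ≠ 0) (h : m ∣ n) (hs : QSmooth Q n) : QSmooth Q m :=
  fun p hp => hs p (Nat.primeFactors_mono h hn hp)

lemma indicator_tsum (L : ℕ) (hL : 0 < L) (hLs : QSmooth Q L) :
    (∑' t : {t : ℕ // 0 < t ∧ QSmooth Q t}, (if L ∣ (t : ℕ) then ((t : ℕ) : ℝ)⁻¹ else 0))
      = ((L : ℕ) : ℝ)⁻¹ * ∑' t : {t : ℕ // 0 < t ∧ QSmooth Q t}, ((t : ℕ) : ℝ)⁻¹ := by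
  set S := {t : ℕ // 0 < t ∧ QSmooth Q t}
  have hmul : ∀ s : S, 0 < L * (s : ℕ) ∧ QSmooth Q (L * (s : ℕ)) := by
    intro s
    refine ⟨Nat.mul_pos hL s.2.1, fun p hp => ?_⟩
    rw [Nat.primeFactors_mul hL.ne' s.2.1.ne', Finset.mem_union] at hp
    rcases hp with hp | hp
    · exact hLs p hp
    · exact s.2.2 p hp
  set i : S → S := fun s => ⟨L * (s : ℕ), hmul s⟩ with hi
  have hinj : Function.Injective i := by
    intro a b hab
    have : L * (a : ℕ) = L * (b : ℕ) := congrArg Subtype.val hab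
    exact Subtype.ext (Nat.eq_of_mul_eq_mul_left hL this)
  have hrange : ∀ t : S, t ∉ Set.range i →
      (if L ∣ (t : ℕ) then ((t : ℕ) : ℝ)⁻¹ else 0) = 0 := by
    intro t ht
    by_cases hd : L ∣ (t : ℕ)
    · exfalso
      apply ht
      have hs : 0 < (t : ℕ) / L ∧ QSmooth Q ((t : ℕ) / L) := by
        constructor
        · exact Nat.div_pos (Nat.le_of_dvd t.2.1 hd) hL
        · exact qsmooth_of_dvd Q t.2.1.ne' (Nat.div_dvd_of_dvd hd) t.2.2
      refine ⟨⟨(t : ℕ) / L, hs⟩, ?_⟩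
      exact Subtype.ext (Nat.mul_div_cancel' hd)
    · simp [hd]
  have hsupp : Function.support (fun t : S => (if L ∣ (t : ℕ) then ((t : ℕ) : ℝ)⁻¹ else 0))
      ⊆ Set.range i := by
    intro t ht
    by_contra hc
    exact ht (hrange t hc)
  have key := hinj.tsum_eq (f := fun t : S => (if L ∣ (t : ℕ) then ((t : ℕ) : ℝ)⁻¹ else 0)) hsupp
  rw [← key]
  have : ∀ s : S, (if L ∣ ((i s : S) : ℕ) then (((i s : S) : ℕ) : ℝ)⁻¹ else 0)
      = ((L : ℕ) : ℝ)⁻¹ * ((s : ℕ) : ℝ)⁻¹ := by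
    intro s
    have hd : L ∣ L * (s : ℕ) := dvd_mul_right _ _
    simp only [hi]
    rw [if_pos hd]
    push_cast
    exact mul_inv _ _
  rw [tsum_congr this, tsum_mul_left]

lemma ram_expand (n : ℕ) (hn : 0 < n) (t : ℕ) (ht : 0 < t) :
    ((ramanujanSum n t : ℤ) : ℝ)
      = ∑ d ∈ n.divisors, (if d ∣ t then (d : ℝ) * ((moebius (n / d) : ℤ) : ℝ) else 0) := by
  have hfil : (Nat.gcd n t).divisors = n.divisors.filter (· ∣ t) := by
    ext d
    simp only [Nat.mem_divisors, Finset.mem_filter, Nat.dvd_gcd_iff]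
    constructor
    · rintro ⟨⟨h1, h2⟩, _⟩; exact ⟨⟨h1, hn.ne'⟩, h2⟩
    · rintro ⟨⟨h1, _⟩, h2⟩; exact ⟨⟨h1, h2⟩, Nat.gcd_ne_zero_left hn.ne'⟩
  rw [ramanujanSum, hfil]
  push_cast
  rw [Finset.sum_filter]

lemma ram_bound (n t : ℕ) (hn : 0 < n) : |ramanujanSum n t| ≤ (n : ℤ) * n := by
  have hsub : (Nat.gcd n t).divisors ⊆ n.divisors := fun d hd => by
    rw [Nat.mem_divisors] at hd ⊢
    exact ⟨hd.1.trans (Nat.gcd_dvd_left n t), hn.ne'⟩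
  calc |ramanujanSum n t| ≤ ∑ d ∈ (Nat.gcd n t).divisors, |(d : ℤ) * moebius (n / d)| :=
        Finset.abs_sum_le_sum_abs _ _
    _ ≤ ∑ d ∈ (Nat.gcd n t).divisors, (n : ℤ) := by
        refine Finset.sum_le_sum fun d hd => ?_
        have hd' := hsub hd
        rw [Nat.mem_divisors] at hd'
        have h1 : (d : ℤ) ≤ n := by exact_mod_cast Nat.le_of_dvd hn hd'.1
        have h2 : (0 : ℤ) ≤ d := Int.natCast_nonneg d
        calc |(d : ℤ) * moebius (n / d)| = |(d : ℤ)| * |moebius (n / d)| := abs_mul _ _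
          _ ≤ |(d : ℤ)| * 1 := by
              exact mul_le_mul_of_nonneg_left abs_moebius_le_one (abs_nonneg _)
          _ = (d : ℤ) := by rw [mul_one, abs_of_nonneg h2]
          _ ≤ n := h1
    _ ≤ (n : ℤ) * n := by
        rw [Finset.sum_const, nsmul_eq_mul]
        have hcard : ((Nat.gcd n t).divisors.card : ℤ) ≤ n := by
          have h1 : (Nat.gcd n t).divisors.card ≤ n.divisors.card :=
            Finset.card_le_card hsub
          have h2 : n.divisors.card ≤ n := by
            have : n.divisors ⊆ Finset.Ico 1 (n + 1) := by
              intro d hd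
              rw [Nat.mem_divisors] at hd
              rw [Finset.mem_Ico]
              exact ⟨Nat.pos_of_dvd_of_pos hd.1 hn, Nat.lt_succ_of_le (Nat.le_of_dvd hn hd.1)⟩
            calc n.divisors.card ≤ (Finset.Ico 1 (n + 1)).card := Finset.card_le_card this
              _ = n := by rw [Nat.card_Ico]; omega
          exact_mod_cast h1.trans h2
        exact mul_le_mul_of_nonneg_right hcard (Int.natCast_nonneg n)

end more

/-- Smooth-twisted orthogonality of Ramanujan sums: for `Q`-smooth `q, ℓ`,
`∏_{p ≤ Q}(1 − 1/p) · ∑_{t Q-smooth} c_q(t)c_ℓ(t)/t = φ(ℓ)·1_{q=ℓ}`,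
the series converging absolutely. -/
theorem smooth_twisted_orthogonality (Q q ℓ : ℕ) (hq : 0 < q) (hℓ : 0 < ℓ)
    (hqs : QSmooth Q q) (hℓs : QSmooth Q ℓ) :
    Summable (fun t : {t : ℕ // 0 < t ∧ QSmooth Q t} =>
      |(ramanujanSum q t * ramanujanSum ℓ t : ℝ)| / (t : ℝ)) ∧
    (∏ p ∈ (Finset.range (Q + 1)).filter Nat.Prime, (1 - 1 / (p : ℝ))) *
        (∑' t : {t : ℕ // 0 < t ∧ QSmooth Q t},
          (ramanujanSum q t * ramanujanSum ℓ t : ℝ) / (t : ℝ)) =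
      if q = ℓ then (Nat.totient ℓ : ℝ) else 0 := by
  have hbound : ∀ (n : ℕ), 0 < n → ∀ t : ℕ, |((ramanujanSum n t : ℤ) : ℝ)| ≤ (n : ℝ) * n := by
    intro n hn t
    have h := ram_bound n t hn
    rw [← Int.cast_abs]
    exact_mod_cast h
  constructor
  · apply summable_of_bound Q _ ((q : ℝ) * q * ((ℓ : ℝ) * ℓ))
    intro t
    rw [abs_of_nonneg (div_nonneg (abs_nonneg _) (by positivity)), div_eq_mul_inv]
    refine mul_le_mul_of_nonneg_right ?_ (by positivity)
    rw [abs_mul]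
    exact mul_le_mul (hbound q hq t) (hbound ℓ hℓ t) (abs_nonneg _) (by positivity)
  · have hexp : ∀ t : {t : ℕ // 0 < t ∧ QSmooth Q t},
        (ramanujanSum q t * ramanujanSum ℓ t : ℝ) / (t : ℝ)
          = ∑ d ∈ q.divisors, ∑ e ∈ ℓ.divisors,
              ((d : ℝ) * ((moebius (q / d) : ℤ) : ℝ) * ((e : ℝ) * ((moebius (ℓ / e) : ℤ) : ℝ)))
                * (if Nat.lcm d e ∣ (t : ℕ) then ((t : ℕ) : ℝ)⁻¹ else 0) := by
      intro t
      rw [ram_expand q hq t t.2.1, ram_expand ℓ hℓ t t.2.1, Finset.sum_mul_sum, Finset.sum_div]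
      refine Finset.sum_congr rfl fun d hd => ?_
      rw [Finset.sum_div]
      refine Finset.sum_congr rfl fun e he => ?_
      by_cases h1 : d ∣ (t : ℕ) <;> by_cases h2 : e ∣ (t : ℕ)
      · have h3 : Nat.lcm d e ∣ (t : ℕ) := Nat.lcm_dvd h1 h2
        rw [if_pos h1, if_pos h2, if_pos h3, div_eq_mul_inv]
      · have h3 : ¬ Nat.lcm d e ∣ (t : ℕ) := fun h => h2 ((Nat.dvd_lcm_right d e).trans h)
        rw [if_pos h1, if_neg h2, if_neg h3]
        simp
      · have h3 : ¬ Nat.lcm d e ∣ (t : ℕ) := fun h => h1 ((Nat.dvd_lcm_left d e).trans h)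
        rw [if_neg h1, if_pos h2, if_neg h3]
        simp
      · have h3 : ¬ Nat.lcm d e ∣ (t : ℕ) := fun h => h1 ((Nat.dvd_lcm_left d e).trans h)
        rw [if_neg h1, if_neg h2, if_neg h3]
        simp
    have hsum_de : ∀ d e : ℕ, Summable (fun t : {t : ℕ // 0 < t ∧ QSmooth Q t} =>
        ((d : ℝ) * ((moebius (q / d) : ℤ) : ℝ) * ((e : ℝ) * ((moebius (ℓ / e) : ℤ) : ℝ)))
          * (if Nat.lcm d e ∣ (t : ℕ) then ((t : ℕ) : ℝ)⁻¹ else 0)) := by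
      intro d e
      apply Summable.mul_left
      apply summable_of_bound Q _ 1
      intro t
      rw [one_mul]
      by_cases h : Nat.lcm d e ∣ (t : ℕ)
      · rw [if_pos h, abs_of_nonneg (by positivity)]
      · rw [if_neg h, abs_zero]
        positivity
    have hstep : (∑' t : {t : ℕ // 0 < t ∧ QSmooth Q t},
          (ramanujanSum q t * ramanujanSum ℓ t : ℝ) / (t : ℝ))
        = (∑ d ∈ q.divisors, ∑ e ∈ ℓ.divisors,
            ((moebius (q / d) : ℤ) : ℝ) * ((moebius (ℓ / e) : ℤ) : ℝ) * (Nat.gcd d e : ℝ))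
          * (∑' t : {t : ℕ // 0 < t ∧ QSmooth Q t}, ((t : ℕ) : ℝ)⁻¹) := by
      rw [tsum_congr hexp]
      rw [Summable.tsum_finsetSum (fun d _ => summable_sum fun e _ => hsum_de d e)]
      rw [Finset.sum_mul]
      refine Finset.sum_congr rfl fun d hd => ?_
      rw [Summable.tsum_finsetSum (fun e _ => hsum_de d e), Finset.sum_mul]
      refine Finset.sum_congr rfl fun e he => ?_
      rw [Nat.mem_divisors] at hd he
      have hd0 : 0 < d := Nat.pos_of_dvd_of_pos hd.1 hq
      have he0 : 0 < e := Nat.pos_of_dvd_of_pos he.1 hℓ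
      have hL0 : 0 < Nat.lcm d e := Nat.pos_of_ne_zero (Nat.lcm_ne_zero hd0.ne' he0.ne')
      have hLs : QSmooth Q (Nat.lcm d e) := by
        have hdvd : Nat.lcm d e ∣ q * ℓ :=
          Nat.lcm_dvd (hd.1.trans (dvd_mul_right q ℓ)) (he.1.trans (dvd_mul_left ℓ q))
        have hqℓ : QSmooth Q (q * ℓ) := by
          intro p hp
          rw [Nat.primeFactors_mul hq.ne' hℓ.ne', Finset.mem_union] at hp
          rcases hp with hp | hp
          · exact hqs p hp
          · exact hℓs p hp
        exact qsmooth_of_dvd Q (Nat.mul_ne_zero hq.ne' hℓ.ne') hdvd hqℓ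
      rw [tsum_mul_left, indicator_tsum Q (Nat.lcm d e) hL0 hLs]
      have hkey : (d : ℝ) * (e : ℝ) * ((Nat.lcm d e : ℕ) : ℝ)⁻¹ = (Nat.gcd d e : ℝ) := by
        have h1 : ((Nat.gcd d e : ℕ) : ℝ) * ((Nat.lcm d e : ℕ) : ℝ) = (d : ℝ) * e := by
          exact_mod_cast congrArg (Nat.cast : ℕ → ℝ) (Nat.gcd_mul_lcm d e)
        have h2 : ((Nat.lcm d e : ℕ) : ℝ) ≠ 0 := by positivity
        field_simp
        linarith [h1]
      rw [← mul_assoc]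
      rw [show ((d : ℝ) * ((moebius (q / d) : ℤ) : ℝ) * ((e : ℝ) * ((moebius (ℓ / e) : ℤ) : ℝ)))
            * ((Nat.lcm d e : ℕ) : ℝ)⁻¹
          = ((moebius (q / d) : ℤ) : ℝ) * ((moebius (ℓ / e) : ℤ) : ℝ)
            * ((d : ℝ) * (e : ℝ) * ((Nat.lcm d e : ℕ) : ℝ)⁻¹) from by ring, hkey]
    rw [hstep, show (∏ p ∈ (Finset.range (Q + 1)).filter Nat.Prime, (1 - 1 / (p : ℝ))) *
        ((∑ d ∈ q.divisors, ∑ e ∈ ℓ.divisors,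
            ((moebius (q / d) : ℤ) : ℝ) * ((moebius (ℓ / e) : ℤ) : ℝ) * (Nat.gcd d e : ℝ))
          * (∑' t : {t : ℕ // 0 < t ∧ QSmooth Q t}, ((t : ℕ) : ℝ)⁻¹))
        = (∑ d ∈ q.divisors, ∑ e ∈ ℓ.divisors,
            ((moebius (q / d) : ℤ) : ℝ) * ((moebius (ℓ / e) : ℤ) : ℝ) * (Nat.gcd d e : ℝ))
          * ((∏ p ∈ (Finset.range (Q + 1)).filter Nat.Prime, (1 - 1 / (p : ℝ))) *
            (∑' t : {t : ℕ // 0 < t ∧ QSmooth Q t}, ((t : ℕ) : ℝ)⁻¹)) from by ring,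
      prod_mul_tsum_inv Q, mul_one, finite_orth q ℓ hq hℓ]
end

section
/- Let F : ℕ → ℂ satisfy the Ramanujan Conjecture bound F(n) ≪_ε n^ε, and fix an integer V > 1. Then the V-smooth restriction F_{(V)} satisfies the Delange hypothesis: ∑_{d=1}^∞ 2^{ω(d)} |(F_{(V)})'(d)| / d < ∞, i.e. ∑_{d V-smooth} 2^{ω(d)} |F'(d)| / d < ∞. -/
open scoped BigOperators
open ArithmeticFunction

private lemma two_pow_omega_le_card_divisors {d : ℕ} (hd : d ≠ 0) :
    2 ^ d.primeFactors.card ≤ d.divisors.card := by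
  rw [Nat.card_divisors hd, ← Finset.prod_const]
  refine Finset.prod_le_prod' fun p hp => ?_
  have h1 : 1 ≤ d.factorization p := by
    rw [← Nat.support_factorization] at hp
    exact Nat.one_le_iff_ne_zero.mpr (Finsupp.mem_support_iff.mp hp)
  omega

private lemma norm_moebius_le_one (m : ℕ) : ‖((moebius m : ℤ) : ℂ)‖ ≤ 1 := by
  have h : |moebius m| ≤ 1 := abs_moebius_le_one
  calc ‖((moebius m : ℤ) : ℂ)‖ = |((moebius m : ℤ) : ℝ)| := by
        rw [Complex.norm_intCast]
    _ = ((|moebius m| : ℤ) : ℝ) := by rw [Int.cast_abs]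
    _ ≤ 1 := by exact_mod_cast h

private lemma summable_aux {x : ℝ} (hx : |x| < 1) :
    Summable (fun n : ℕ => ((n : ℝ) + 1) ^ 2 * x ^ n) := by
  have h2 := summable_pow_mul_geometric_of_norm_lt_one (R := ℝ) 2 hx
  have h1 := summable_pow_mul_geometric_of_norm_lt_one (R := ℝ) 1 hx
  have h0 : Summable (fun n : ℕ => x ^ n) :=
    summable_geometric_of_norm_lt_one (by rwa [Real.norm_eq_abs])
  have := ((h2.add (h1.mul_left 2)).add h0)
  refine this.congr fun n => ?_
  ring

set_option maxHeartbeats 1000000 in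
/-- Delange hypothesis for the `V`-smooth restriction:
`∑_{d V-smooth} 2^{ω(d)} |F'(d)| / d < ∞`. -/
theorem delange_hypothesis_smooth_restriction (F : ℕ → ℂ)
    (hF : ∀ ε : ℝ, 0 < ε → ∃ C : ℝ, ∀ n : ℕ, 0 < n → ‖F n‖ ≤ C * (n : ℝ) ^ ε)
    (V : ℕ) (hV : 1 < V) :
    Summable (fun d : {d : ℕ // 0 < d ∧ QSmooth V d} =>
      (2 : ℝ) ^ (d : ℕ).primeFactors.card * ‖era F d‖ / (d : ℝ)) := by
  obtain ⟨C, hC⟩ := hF (1/2) (by norm_num)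
  have hC0 : 0 ≤ C := by
    have := hC 1 one_pos
    simp only [Nat.cast_one, Real.one_rpow, mul_one] at this
    exact le_trans (norm_nonneg _) this
  -- the comparison function
  set g : ℕ → ℝ := fun d => (d.divisors.card : ℝ) ^ 2 * (d : ℝ) ^ (-(1/2) : ℝ) with hg
  have hg1 : g 1 = 1 := by simp [hg]
  have hgmul : ∀ {m n : ℕ}, Nat.Coprime m n → g (m * n) = g m * g n := by
    intro m n hmn
    simp only [hg, hmn.card_divisors_mul, Nat.cast_mul]
    rw [Real.mul_rpow (Nat.cast_nonneg m) (Nat.cast_nonneg n)]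
    push_cast
    ring
  have hgsum : ∀ {p : ℕ}, p.Prime → Summable (fun n : ℕ => ‖g (p ^ n)‖) := by
    intro p hp
    have hx : |(p : ℝ) ^ (-(1/2) : ℝ)| < 1 := by
      rw [abs_of_nonneg (Real.rpow_nonneg (Nat.cast_nonneg p) _)]
      exact Real.rpow_lt_one_of_one_lt_of_neg (by exact_mod_cast hp.one_lt) (by norm_num)
    refine (summable_aux hx).of_nonneg_of_le (fun n => norm_nonneg _) fun n => ?_
    have hcard : ((p ^ n).divisors.card : ℝ) = (n : ℝ) + 1 := by
      rw [Nat.divisors_prime_pow hp]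
      simp
    have hpow : ((p ^ n : ℕ) : ℝ) ^ (-(1/2) : ℝ) = ((p : ℝ) ^ (-(1/2) : ℝ)) ^ n := by
      rw [Nat.cast_pow, ← Real.rpow_natCast ((p : ℝ)) n, ← Real.rpow_mul (Nat.cast_nonneg p),
        mul_comm, Real.rpow_mul (Nat.cast_nonneg p), Real.rpow_natCast]
    have hnn : 0 ≤ g (p ^ n) := by
      apply mul_nonneg (by positivity) (Real.rpow_nonneg (Nat.cast_nonneg _) _)
    rw [Real.norm_of_nonneg hnn]
    simp only [hg]
    rw [hcard, hpow]
  have hgsummable :=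
    (EulerProduct.summable_and_hasSum_smoothNumbers_prod_primesBelow_tsum hg1 hgmul hgsum
      (V + 1)).1
  -- transfer to our subtype
  set S := {d : ℕ // 0 < d ∧ QSmooth V d}
  have hmem : ∀ d : S, (d : ℕ) ∈ (V + 1).smoothNumbers := by
    rintro ⟨d, hd, hsm⟩
    rw [Nat.mem_smoothNumbers]
    refine ⟨hd.ne', fun p hp => ?_⟩
    have : p ∈ d.primeFactors := by
      rw [Nat.mem_primeFactors]
      exact ⟨(Nat.prime_of_mem_primeFactorsList hp), Nat.dvd_of_mem_primeFactorsList hp, hd.ne'⟩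
    exact Nat.lt_succ_of_le (hsm p this)
  have hinj : Function.Injective (fun d : S => (⟨(d : ℕ), hmem d⟩ : (V + 1).smoothNumbers)) := by
    intro a b hab
    exact Subtype.ext (by simpa [Subtype.ext_iff] using hab)
  have hS0 : Summable ((fun m : (V + 1).smoothNumbers => ‖g (m : ℕ)‖) ∘
      (fun d : S => (⟨(d : ℕ), hmem d⟩ : (V + 1).smoothNumbers))) :=
    Summable.comp_injective hgsummable hinj
  have hS : Summable (fun d : S => ‖g (d : ℕ)‖) := hS0
  refine ((hS.mul_left C).of_nonneg_of_le (fun d => by positivity) fun d => ?_)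
  obtain ⟨d, hd, hsm⟩ := d
  simp only
  have hd0 : (0:ℝ) < (d : ℝ) := by exact_mod_cast hd
  have hgnn : 0 ≤ g d :=
    mul_nonneg (by positivity) (Real.rpow_nonneg (Nat.cast_nonneg _) _)
  rw [Real.norm_of_nonneg hgnn]
  -- bound on era
  have hera : ‖era F d‖ ≤ (d.divisors.card : ℝ) * (C * (d : ℝ) ^ ((1:ℝ)/2)) := by
    rw [era]
    refine le_trans (norm_sum_le _ _) ?_
    have key : ∀ t ∈ d.divisors,
        ‖F t * ((moebius (d / t) : ℤ) : ℂ)‖ ≤ C * (d : ℝ) ^ ((1:ℝ)/2) := by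
      intro t ht
      have ht' := Nat.mem_divisors.mp ht
      have htpos : 0 < t := Nat.pos_of_mem_divisors ht
      have htd : t ≤ d := Nat.le_of_dvd hd ht'.1
      calc ‖F t * ((moebius (d / t) : ℤ) : ℂ)‖ ≤ ‖F t‖ * 1 := by
            rw [norm_mul]
            exact mul_le_mul_of_nonneg_left (norm_moebius_le_one _) (norm_nonneg _)
        _ = ‖F t‖ := mul_one _
        _ ≤ C * (t : ℝ) ^ ((1:ℝ)/2) := by
            have := hC t htpos
            norm_num at this ⊢
            exact this
        _ ≤ C * (d : ℝ) ^ ((1:ℝ)/2) :=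
            mul_le_mul_of_nonneg_left
              (Real.rpow_le_rpow (Nat.cast_nonneg t) (by exact_mod_cast htd) (by norm_num)) hC0
    have := Finset.sum_le_card_nsmul d.divisors _ _ key
    simpa [nsmul_eq_mul] using this
  have homega : ((2:ℝ) ^ d.primeFactors.card) ≤ (d.divisors.card : ℝ) := by
    exact_mod_cast two_pow_omega_le_card_divisors hd.ne'
  have hrw : (d : ℝ) ^ ((1:ℝ)/2) / (d : ℝ) = (d : ℝ) ^ (-(1/2) : ℝ) := by
    rw [← Real.rpow_one (d : ℝ)] ; rw [Real.rpow_one (d:ℝ)]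
    rw [show (-(1/2) : ℝ) = (1/2 : ℝ) - 1 by norm_num, Real.rpow_sub hd0, Real.rpow_one]
  have h2nn : (0:ℝ) ≤ (2:ℝ) ^ d.primeFactors.card := by positivity
  calc (2:ℝ) ^ d.primeFactors.card * ‖era F d‖ / (d : ℝ)
      ≤ (d.divisors.card : ℝ) * ((d.divisors.card : ℝ) * (C * (d : ℝ) ^ ((1:ℝ)/2))) / (d : ℝ) := by
        exact div_le_div_of_nonneg_right
          (mul_le_mul homega hera (norm_nonneg _) (Nat.cast_nonneg _)) hd0.le
    _ = C * g d := by
        simp only [hg]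
        rw [← hrw]
        field_simp
end

section
/- Let F : ℕ → ℂ satisfy F(n) ≪_ε n^ε and fix an integer V > 1. For every V-smooth ℓ, the Carmichael coefficient of F_{(V)}, namely (1/φ(ℓ)) lim_{x→∞} (1/x) ∑_{a ≤ x} F_{(V)}(a) c_ℓ(a), exists and equals ∏_{p ≤ V}(1 − 1/p) · (1/φ(ℓ)) · ∑_{t V-smooth} F(t) c_ℓ(t) / t. -/
open scoped BigOperators
open ArithmeticFunction

namespace CarmichaelAux

open Finset Filter

lemma qsmooth_of_dvd {V m n : ℕ} (hn : n ≠ 0) (h : QSmooth V n) (hd : m ∣ n) : QSmooth V m :=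
  fun p hp => h p (Nat.primeFactors_mono hd hn hp)

lemma coprime_smooth_sifted {V m n : ℕ} (hm0 : m ≠ 0) (hn0 : n ≠ 0)
    (hm : QSmooth V m) (hn : QSifted V n) : Nat.Coprime m n := by
  rw [Nat.Coprime]
  by_contra hg
  obtain ⟨p, hp, hpd⟩ := Nat.exists_prime_and_dvd hg
  have h1 : p ∣ m := hpd.trans (Nat.gcd_dvd_left m n)
  have h2 : p ∣ n := hpd.trans (Nat.gcd_dvd_right m n)
  have hb1 : p ≤ V := hm p (Nat.mem_primeFactors.mpr ⟨hp, h1, hm0⟩)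
  have hb2 : V < p := hn p (Nat.mem_primeFactors.mpr ⟨hp, h2, hn0⟩)
  omega

/-- The `V`-smooth part of `a`. -/
def smPart (V a : ℕ) : ℕ :=
  ∏ p ∈ a.primeFactors.filter (fun p => p ≤ V), p ^ a.factorization p

/-- The `V`-rough (sifted) part of `a`. -/
def rgPart (V a : ℕ) : ℕ :=
  ∏ p ∈ a.primeFactors.filter (fun p => ¬ p ≤ V), p ^ a.factorization p

lemma smPart_pos (V a : ℕ) : 0 < smPart V a :=
  Finset.prod_pos fun p hp =>
    pow_pos (Nat.pos_of_mem_primeFactors (Finset.mem_filter.mp hp).1) _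

lemma rgPart_pos (V a : ℕ) : 0 < rgPart V a :=
  Finset.prod_pos fun p hp =>
    pow_pos (Nat.pos_of_mem_primeFactors (Finset.mem_filter.mp hp).1) _

lemma smPart_mul_rgPart {V a : ℕ} (ha : a ≠ 0) : smPart V a * rgPart V a = a := by
  rw [smPart, rgPart, Finset.prod_filter_mul_prod_filter_not]
  conv_rhs => rw [← Nat.factorization_prod_pow_eq_self ha]
  rfl

lemma qsmooth_smPart (V a : ℕ) : QSmooth V (smPart V a) := by
  intro q hq
  rw [Nat.mem_primeFactors] at hq
  obtain ⟨hq1, hq2, -⟩ := hq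
  obtain ⟨p, hp, hdvd⟩ := (Prime.dvd_finset_prod_iff hq1.prime _).mp hq2
  rw [Finset.mem_filter] at hp
  have hpp : Nat.Prime p := Nat.prime_of_mem_primeFactors hp.1
  have hqp : q = p :=
    (Nat.prime_dvd_prime_iff_eq hq1 hpp).mp (hq1.dvd_of_dvd_pow hdvd)
  omega

lemma qsifted_rgPart (V a : ℕ) : QSifted V (rgPart V a) := by
  intro q hq
  rw [Nat.mem_primeFactors] at hq
  obtain ⟨hq1, hq2, -⟩ := hq
  obtain ⟨p, hp, hdvd⟩ := (Prime.dvd_finset_prod_iff hq1.prime _).mp hq2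
  rw [Finset.mem_filter] at hp
  have hpp : Nat.Prime p := Nat.prime_of_mem_primeFactors hp.1
  have hqp : q = p :=
    (Nat.prime_dvd_prime_iff_eq hq1 hpp).mp (hq1.dvd_of_dvd_pow hdvd)
  omega

lemma smPart_dvd {V a : ℕ} (ha : a ≠ 0) : smPart V a ∣ a :=
  ⟨rgPart V a, (smPart_mul_rgPart ha).symm⟩

lemma dvd_smPart_iff {V a d : ℕ} (ha : a ≠ 0) :
    d ∣ smPart V a ↔ d ∣ a ∧ QSmooth V d := by
  constructor
  · intro h
    exact ⟨h.trans (smPart_dvd ha),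
      qsmooth_of_dvd (smPart_pos V a).ne' (qsmooth_smPart V a) h⟩
  · rintro ⟨hda, hds⟩
    have hd0 : d ≠ 0 := by
      rintro rfl
      exact ha (Nat.eq_zero_of_zero_dvd hda)
    have hcop : Nat.Coprime d (rgPart V a) :=
      coprime_smooth_sifted hd0 (rgPart_pos V a).ne' hds (qsifted_rgPart V a)
    refine hcop.dvd_of_dvd_mul_right ?_
    rw [smPart_mul_rgPart ha]
    exact hda

lemma smPart_mul_eq {V s m : ℕ} (hs0 : s ≠ 0) (hm0 : m ≠ 0)
    (hs : QSmooth V s) (hm : QSifted V m) :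
    smPart V (s * m) = s ∧ rgPart V (s * m) = m := by
  have ha : s * m ≠ 0 := mul_ne_zero hs0 hm0
  have h1 : s ∣ smPart V (s * m) := (dvd_smPart_iff ha).mpr ⟨Dvd.intro m rfl, hs⟩
  have h2 : smPart V (s * m) ∣ s := by
    have hcop : Nat.Coprime (smPart V (s * m)) m :=
      coprime_smooth_sifted (smPart_pos V (s * m)).ne' hm0 (qsmooth_smPart V (s * m)) hm
    exact hcop.dvd_of_dvd_mul_right (smPart_dvd ha)
  have hsm : smPart V (s * m) = s := Nat.dvd_antisymm h2 h1
  refine ⟨hsm, ?_⟩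
  have := smPart_mul_rgPart (V := V) ha
  rw [hsm] at this
  exact Nat.eq_of_mul_eq_mul_left (Nat.pos_of_ne_zero hs0) this

lemma sum_divisors_era (F : ℕ → ℂ) {n : ℕ} (hn : 0 < n) :
    ∑ d ∈ n.divisors, era F d = F n := by
  have key : ∀ n : ℕ, n > 0 →
      ∑ x ∈ n.divisorsAntidiagonal, (moebius x.fst) • F x.snd = era F n := by
    intro n _
    rw [Nat.sum_divisorsAntidiagonal' (f := fun d e => (moebius d) • F e)]
    unfold era
    refine Finset.sum_congr rfl fun t _ => ?_
    rw [zsmul_eq_mul, mul_comm]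
  exact ArithmeticFunction.sum_eq_iff_sum_smul_moebius_eq.mpr key n hn

lemma FV_eq (F : ℕ → ℂ) {V a : ℕ} (ha : a ≠ 0) :
    ∑ d ∈ a.divisors.filter (fun d => QSmooth V d), era F d = F (smPart V a) := by
  have hset : a.divisors.filter (fun d => QSmooth V d) = (smPart V a).divisors := by
    ext d
    simp only [Finset.mem_filter, Nat.mem_divisors]
    constructor
    · rintro ⟨⟨h1, -⟩, h2⟩
      exact ⟨(dvd_smPart_iff ha).mpr ⟨h1, h2⟩, (smPart_pos V a).ne'⟩
    · rintro ⟨h1, -⟩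
      obtain ⟨h2, h3⟩ := (dvd_smPart_iff ha).mp h1
      exact ⟨⟨h2, ha⟩, h3⟩
  rw [hset, sum_divisors_era F (smPart_pos V a)]

lemma gcd_smPart {V ℓ a : ℕ} (hℓ0 : ℓ ≠ 0) (hℓs : QSmooth V ℓ) (ha : a ≠ 0) :
    Nat.gcd ℓ a = Nat.gcd ℓ (smPart V a) := by
  conv_lhs => rw [← smPart_mul_rgPart (V := V) ha]
  exact Nat.Coprime.gcd_mul_right_cancel_right _
    ((coprime_smooth_sifted hℓ0 (rgPart_pos V a).ne' hℓs (qsifted_rgPart V a)).symm)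

lemma ramanujanSum_smPart {V ℓ a : ℕ} (hℓ0 : ℓ ≠ 0) (hℓs : QSmooth V ℓ) (ha : a ≠ 0) :
    ramanujanSum ℓ a = ramanujanSum ℓ (smPart V a) := by
  unfold ramanujanSum
  rw [gcd_smPart hℓ0 hℓs ha]

lemma ram_bound {ℓ : ℕ} (hℓ0 : ℓ ≠ 0) (n : ℕ) :
    |ramanujanSum ℓ n| ≤ ∑ d ∈ ℓ.divisors, (d : ℤ) := by
  calc |ramanujanSum ℓ n| ≤ ∑ d ∈ (Nat.gcd ℓ n).divisors, |(d : ℤ) * moebius (ℓ / d)| :=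
        Finset.abs_sum_le_sum_abs _ _
    _ ≤ ∑ d ∈ (Nat.gcd ℓ n).divisors, (d : ℤ) := by
        refine Finset.sum_le_sum fun d _ => ?_
        rw [abs_mul]
        calc |(d:ℤ)| * |moebius (ℓ / d)| ≤ |(d:ℤ)| * 1 :=
              mul_le_mul_of_nonneg_left ArithmeticFunction.abs_moebius_le_one (abs_nonneg _)
          _ = (d : ℤ) := by rw [mul_one, abs_of_nonneg (Int.natCast_nonneg d)]
    _ ≤ ∑ d ∈ ℓ.divisors, (d : ℤ) := by
        refine Finset.sum_le_sum_of_subset_of_nonneg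
          (Nat.divisors_subset_of_dvd hℓ0 (Nat.gcd_dvd_left ℓ n)) ?_
        intro i _ _
        exact Int.natCast_nonneg i

/-- The primorial of primes `≤ V`. -/
def primor (V : ℕ) : ℕ := ∏ p ∈ Nat.primesBelow (V + 1), p

lemma primor_pos (V : ℕ) : 0 < primor V :=
  Finset.prod_pos fun p hp => (Nat.prime_of_mem_primesBelow hp).pos

lemma two_le_primor {V : ℕ} (hV : 1 < V) : 2 ≤ primor V := by
  have h2 : (2 : ℕ) ∈ Nat.primesBelow (V + 1) :=
    Nat.mem_primesBelow.mpr ⟨by omega, Nat.prime_two⟩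
  have := Finset.dvd_prod_of_mem (fun p => p) h2
  exact Nat.le_of_dvd (primor_pos V) this

lemma prime_dvd_primor_iff {V q : ℕ} (hq : Nat.Prime q) :
    q ∣ primor V ↔ q ≤ V := by
  constructor
  · intro h
    obtain ⟨p, hp, hdvd⟩ := (Prime.dvd_finset_prod_iff hq.prime _).mp h
    have hpp := Nat.prime_of_mem_primesBelow hp
    have := (Nat.prime_dvd_prime_iff_eq hq hpp).mp hdvd
    have := Nat.lt_of_mem_primesBelow hp
    omega
  · intro h
    exact Finset.dvd_prod_of_mem (fun p => p)
      (Nat.mem_primesBelow.mpr ⟨by omega, hq⟩)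

lemma qsifted_iff_coprime {V m : ℕ} (hm : m ≠ 0) :
    QSifted V m ↔ Nat.Coprime (primor V) m := by
  constructor
  · intro h
    rw [Nat.Coprime]
    by_contra hg
    obtain ⟨q, hq, hqd⟩ := Nat.exists_prime_and_dvd hg
    have h1 : q ∣ primor V := hqd.trans (Nat.gcd_dvd_left _ _)
    have h2 : q ∣ m := hqd.trans (Nat.gcd_dvd_right _ _)
    have hb1 : q ≤ V := (prime_dvd_primor_iff hq).mp h1
    have hb2 : V < q := h q (Nat.mem_primeFactors.mpr ⟨hq, h2, hm⟩)
    omega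
  · intro h p hp
    rw [Nat.mem_primeFactors] at hp
    obtain ⟨hp1, hp2, -⟩ := hp
    by_contra hb
    push_neg at hb
    have h1 : p ∣ primor V := (prime_dvd_primor_iff hp1).mpr hb
    have : p ∣ Nat.gcd (primor V) m := Nat.dvd_gcd h1 hp2
    rw [h] at this
    exact hp1.one_lt.ne' (Nat.eq_one_of_dvd_one this)

/-- Count of `V`-sifted numbers in `[1, y]`. -/
def Asift (V y : ℕ) : ℕ := ((Finset.Icc 1 y).filter (fun m => QSifted V m)).card

/-- Count of numbers `< y` coprime to the primorial. -/
def A' (V y : ℕ) : ℕ := ((Finset.range y).filter (fun m => (primor V).Coprime m)).card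

lemma A'_add (V y : ℕ) : A' V (y + primor V) = A' V y + (primor V).totient := by
  unfold A'
  rw [Finset.range_eq_Ico, ← Finset.Ico_union_Ico_eq_Ico (Nat.zero_le y) (Nat.le_add_right _ _),
    Finset.filter_union, Finset.card_union_of_disjoint
      (Finset.disjoint_filter_filter (Finset.Ico_disjoint_Ico_consecutive 0 y _)),
    ← Finset.range_eq_Ico, Nat.filter_coprime_Ico_eq_totient]

lemma A'_mul (V k : ℕ) : A' V (k * primor V) = k * (primor V).totient := by
  induction k with
  | zero => simp [A']
  | succ n ih => rw [Nat.succ_mul, A'_add, ih, Nat.succ_mul]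

lemma A'_mono (V : ℕ) : Monotone (A' V) := fun a b h =>
  Finset.card_le_card (Finset.filter_subset_filter _ (Finset.range_subset_range.mpr h))

lemma A'_bound {V : ℕ} (y : ℕ) :
    |(A' V y : ℝ) - ((primor V).totient : ℝ) / (primor V) * y| ≤ ((primor V).totient : ℝ) := by
  set P := primor V with hP
  have hP0 : 0 < P := primor_pos V
  set k := y / P with hk
  have h1 : k * P ≤ y := Nat.div_mul_le_self y P
  have h2 : y ≤ (k + 1) * P := le_of_lt ((Nat.div_lt_iff_lt_mul hP0).mp (Nat.lt_succ_self k))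
  have hlow : (k : ℝ) * (P.totient : ℝ) ≤ (A' V y : ℝ) := by
    have := A'_mono V h1
    rw [A'_mul] at this
    exact_mod_cast this
  have hhigh : (A' V y : ℝ) ≤ ((k : ℝ) + 1) * (P.totient : ℝ) := by
    have := A'_mono V h2
    rw [A'_mul] at this
    exact_mod_cast this
  have hy1 : (k : ℝ) * P ≤ (y : ℝ) := by exact_mod_cast h1
  have hy2 : (y : ℝ) ≤ ((k : ℝ) + 1) * P := by exact_mod_cast h2
  have hPpos : (0 : ℝ) < P := by exact_mod_cast hP0
  have htn : (0 : ℝ) ≤ (P.totient : ℝ) := Nat.cast_nonneg _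
  have hdlow : (k : ℝ) * (P.totient : ℝ) ≤ (P.totient : ℝ) / P * y := by
    rw [div_mul_eq_mul_div, le_div_iff₀ hPpos]
    calc (k : ℝ) * (P.totient : ℝ) * P = (P.totient : ℝ) * ((k : ℝ) * P) := by ring
      _ ≤ (P.totient : ℝ) * y := by
          exact mul_le_mul_of_nonneg_left hy1 htn
  have hdhigh : (P.totient : ℝ) / P * y ≤ ((k : ℝ) + 1) * (P.totient : ℝ) := by
    rw [div_mul_eq_mul_div, div_le_iff₀ hPpos]
    calc (P.totient : ℝ) * y ≤ (P.totient : ℝ) * (((k : ℝ) + 1) * P) :=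
          mul_le_mul_of_nonneg_left hy2 htn
      _ = ((k : ℝ) + 1) * (P.totient : ℝ) * P := by ring
  rw [abs_le]
  constructor <;> nlinarith

lemma Asift_eq {V : ℕ} (hV : 1 < V) (y : ℕ) : Asift V y = A' V (y + 1) := by
  unfold Asift A'
  congr 1
  ext m
  simp only [Finset.mem_filter, Finset.mem_Icc, Finset.mem_range]
  constructor
  · rintro ⟨⟨h1, h2⟩, h3⟩
    exact ⟨by omega, (qsifted_iff_coprime (by omega)).mp h3⟩
  · rintro ⟨h1, h2⟩
    have hm0 : m ≠ 0 := by
      rintro rfl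
      rw [Nat.coprime_zero_right] at h2
      have := two_le_primor hV
      omega
    exact ⟨⟨by omega, by omega⟩, (qsifted_iff_coprime hm0).mpr h2⟩

lemma Asift_bound {V : ℕ} (hV : 1 < V) (y : ℕ) :
    |(Asift V y : ℝ) - ((primor V).totient : ℝ) / (primor V) * y| ≤ (primor V : ℝ) + 1 := by
  set P := primor V with hPdef
  have hP0 : (0 : ℝ) < P := by exact_mod_cast primor_pos V
  have htP : ((P.totient : ℝ)) ≤ (P : ℝ) := by exact_mod_cast Nat.totient_le P
  have hd1 : ((P.totient : ℝ)) / P ≤ 1 := by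
    rw [div_le_one hP0]; exact htP
  have hd0 : (0 : ℝ) ≤ ((P.totient : ℝ)) / P := by positivity
  have h := A'_bound (V := V) (y + 1)
  rw [← Asift_eq hV y] at h
  have hcast : ((y : ℝ) + 1) = ((y + 1 : ℕ) : ℝ) := by push_cast; ring
  rw [abs_le] at h ⊢
  rw [← hcast] at h
  constructor <;> nlinarith [h.1, h.2]

end CarmichaelAux

namespace CarmichaelAux

open Finset Filter Real

lemma mem_smooth_iff {V t : ℕ} : (0 < t ∧ QSmooth V t) ↔ t ∈ Nat.smoothNumbers (V + 1) := by
  rw [Nat.mem_smoothNumbers']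
  constructor
  · rintro ⟨ht, hs⟩ p hp hpd
    have : p ≤ V := hs p (Nat.mem_primeFactors.mpr ⟨hp, hpd, ht.ne'⟩)
    omega
  · intro h
    have ht : t ≠ 0 := by
      rintro rfl
      obtain ⟨p, hp1, hp2⟩ := Nat.exists_infinite_primes (V + 1)
      exact absurd (h p hp2 (dvd_zero p)) (by omega)
    refine ⟨Nat.pos_of_ne_zero ht, fun p hp => ?_⟩
    rw [Nat.mem_primeFactors] at hp
    have := h p hp.1 hp.2.1
    omega

lemma summable_smooth_rpow (V : ℕ) {esig : ℝ} (hesig : 0 < esig) :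
    Summable (fun s : {t : ℕ // 0 < t ∧ QSmooth V t} => ((s : ℕ) : ℝ) ^ (-esig)) := by
  have key := EulerProduct.summable_and_hasSum_smoothNumbers_prod_primesBelow_tsum
    (f := fun n : ℕ => ((n : ℝ) ^ (-esig)))
    (by simp)
    (fun {m n} _ => by push_cast; rw [Real.mul_rpow (Nat.cast_nonneg m) (Nat.cast_nonneg n)])
    (fun {p} hp => ?_) (V + 1)
  · have hs : Summable (fun m : Nat.smoothNumbers (V + 1) => ((m : ℕ) : ℝ) ^ (-esig)) := by
      refine key.1.congr fun m => ?_
      rw [Real.norm_eq_abs, abs_of_nonneg (Real.rpow_nonneg (Nat.cast_nonneg _) _)]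
    exact (Equiv.subtypeEquivRight fun t => mem_smooth_iff).summable_iff.mpr hs
  · have hp1 : (1 : ℝ) < (p : ℝ) := by exact_mod_cast hp.one_lt
    have heq : ∀ n : ℕ, ‖(((p ^ n : ℕ) : ℝ)) ^ (-esig)‖ = ((p : ℝ) ^ (-esig)) ^ n := by
      intro n
      rw [Real.norm_eq_abs, abs_of_nonneg (Real.rpow_nonneg (Nat.cast_nonneg _) _)]
      push_cast
      rw [← Real.rpow_natCast ((p : ℝ) ^ (-esig)) n, ← Real.rpow_natCast (p : ℝ) n,
        ← Real.rpow_mul (by positivity), ← Real.rpow_mul (by positivity), mul_comm]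
    refine Summable.congr ?_ (fun n => (heq n).symm)
    exact summable_geometric_of_lt_one (Real.rpow_nonneg (by positivity) _)
      (Real.rpow_lt_one_of_one_lt_of_neg hp1 (by linarith))

lemma tendsto_sum_Icc_subtype {p : ℕ → Prop} [DecidablePred p] (hp : ∀ t, p t → 0 < t)
    {f : {t : ℕ // p t} → ℂ} (hf : Summable f) :
    Tendsto (fun x : ℕ => ∑ s ∈ (Finset.Icc 1 x).subtype p, f s) atTop
      (nhds (∑' s, f s)) := by
  refine hf.hasSum.comp (tendsto_atTop_finset_of_monotone ?_ ?_)
  · exact fun a b h => Finset.subtype_mono (Finset.Icc_subset_Icc_right h)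
  · intro t
    refine ⟨t.1, Finset.mem_subtype.mpr ?_⟩
    rw [Finset.mem_Icc]
    exact ⟨hp t.1 t.2, le_refl _⟩

lemma prod_one_sub_inv {V : ℕ} (hV : 1 < V) :
    ∏ p ∈ Nat.primesBelow (V + 1), (1 - 1 / (p : ℂ)) =
      ((primor V).totient : ℂ) / (primor V) := by
  have hprimes : ∀ p ∈ Nat.primesBelow (V + 1), Nat.Prime p :=
    fun p hp => Nat.prime_of_mem_primesBelow hp
  have hfac : (primor V).primeFactors = Nat.primesBelow (V + 1) :=
    Nat.primeFactors_prod hprimes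
  have hQ := Nat.totient_eq_mul_prod_factors (primor V)
  have hC : ((primor V).totient : ℂ) =
      (primor V : ℂ) * ∏ p ∈ (primor V).primeFactors, (1 - (p : ℂ)⁻¹) := by
    have := congrArg (fun q : ℚ => (q : ℂ)) hQ
    push_cast at this ⊢
    convert this using 2
  rw [hfac] at hC
  have hP0 : (primor V : ℂ) ≠ 0 := by
    exact_mod_cast (primor_pos V).ne'
  rw [hC, mul_comm, mul_div_assoc, div_self hP0, mul_one]
  refine Finset.prod_congr rfl fun p _ => ?_
  rw [one_div]

/-- The key combinatorial rearrangement. -/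
lemma Sx_eq (F : ℕ → ℂ) {V ℓ : ℕ} (hℓ0 : ℓ ≠ 0) (hℓs : QSmooth V ℓ) (x : ℕ) :
    ∑ a ∈ Finset.Icc 1 x,
        (∑ d ∈ a.divisors.filter (fun d => QSmooth V d), era F d) * (ramanujanSum ℓ a : ℂ) =
      ∑ s ∈ (Finset.Icc 1 x).filter (fun s => QSmooth V s),
        (F s * (ramanujanSum ℓ s : ℂ)) * (Asift V (x / s) : ℂ) := by
  have step1 : ∀ a ∈ Finset.Icc 1 x,
      (∑ d ∈ a.divisors.filter (fun d => QSmooth V d), era F d) * (ramanujanSum ℓ a : ℂ) =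
        F (smPart V a) * (ramanujanSum ℓ (smPart V a) : ℂ) := by
    intro a ha
    rw [Finset.mem_Icc] at ha
    have ha0 : a ≠ 0 := by omega
    rw [FV_eq F ha0, ramanujanSum_smPart hℓ0 hℓs ha0]
  rw [Finset.sum_congr rfl step1]
  have step2 :
      ∑ a ∈ Finset.Icc 1 x, F (smPart V a) * (ramanujanSum ℓ (smPart V a) : ℂ) =
        ∑ q ∈ ((Finset.Icc 1 x).filter (fun s => QSmooth V s)).sigma
            (fun s => (Finset.Icc 1 (x / s)).filter (fun m => QSifted V m)),
          F q.1 * (ramanujanSum ℓ q.1 : ℂ) := by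
    refine Finset.sum_nbij' (fun a => ⟨smPart V a, rgPart V a⟩)
      (fun q => q.1 * q.2) ?_ ?_ ?_ ?_ ?_
    · intro a ha
      rw [Finset.mem_Icc] at ha
      have ha0 : a ≠ 0 := by omega
      rw [Finset.mem_sigma, Finset.mem_filter, Finset.mem_filter, Finset.mem_Icc, Finset.mem_Icc]
      dsimp only
      have hsd : smPart V a ∣ a := smPart_dvd ha0
      have hsle : smPart V a ≤ a := Nat.le_of_dvd (by omega) hsd
      refine ⟨⟨⟨smPart_pos V a, by omega⟩, qsmooth_smPart V a⟩,
        ⟨⟨rgPart_pos V a, ?_⟩, qsifted_rgPart V a⟩⟩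
      rw [Nat.le_div_iff_mul_le (smPart_pos V a), mul_comm]
      rw [smPart_mul_rgPart ha0]
      omega
    · rintro ⟨s, m⟩ hq
      dsimp only
      rw [Finset.mem_sigma, Finset.mem_filter, Finset.mem_filter, Finset.mem_Icc,
        Finset.mem_Icc] at hq
      dsimp only at hq
      obtain ⟨⟨⟨h1, h2⟩, h3⟩, ⟨h4, h5⟩, h6⟩ := hq
      rw [Finset.mem_Icc]
      constructor
      · exact Nat.one_le_iff_ne_zero.mpr (mul_ne_zero (by omega) (by omega))
      · rw [Nat.le_div_iff_mul_le (by omega), mul_comm] at h5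
        omega
    · intro a ha
      dsimp only
      rw [Finset.mem_Icc] at ha
      exact smPart_mul_rgPart (by omega)
    · rintro ⟨s, m⟩ hq
      dsimp only
      rw [Finset.mem_sigma, Finset.mem_filter, Finset.mem_filter, Finset.mem_Icc,
        Finset.mem_Icc] at hq
      dsimp only at hq
      obtain ⟨⟨⟨h1, h2⟩, h3⟩, ⟨h4, h5⟩, h6⟩ := hq
      obtain ⟨e1, e2⟩ := smPart_mul_eq (V := V) (by omega) (by omega) h3 h6
      rw [e1, e2]
    · intro a ha
      rfl
  rw [step2, Finset.sum_sigma]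
  refine Finset.sum_congr rfl fun s hs => ?_
  dsimp only
  rw [Finset.sum_const, nsmul_eq_mul, mul_comm]
  rfl

end CarmichaelAux

open CarmichaelAux Finset Filter in
/-- The Carmichael coefficient of the `V`-smooth restriction `F_{(V)}` exists for
`V`-smooth `ℓ` and equals `∏_{p ≤ V}(1 − 1/p)·(1/φ(ℓ))·∑_{t V-smooth} F(t)c_ℓ(t)/t`. -/
theorem carmichael_coeff_smooth_restriction (F : ℕ → ℂ)
    (hF : ∀ ε : ℝ, 0 < ε → ∃ C : ℝ, ∀ n : ℕ, 0 < n → ‖F n‖ ≤ C * (n : ℝ) ^ ε)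
    (V : ℕ) (hV : 1 < V) (ℓ : ℕ) (hℓ : 0 < ℓ) (hℓs : QSmooth V ℓ) :
    Filter.Tendsto
      (fun x : ℕ => (1 / (Nat.totient ℓ : ℂ)) * ((1 / (x : ℂ)) *
        ∑ a ∈ Finset.Icc 1 x,
          (∑ d ∈ a.divisors.filter (fun d => QSmooth V d), era F d) *
            (ramanujanSum ℓ a : ℂ)))
      Filter.atTop
      (nhds ((∏ p ∈ (Finset.range (V + 1)).filter Nat.Prime, (1 - 1 / (p : ℂ))) *
        ((1 / (Nat.totient ℓ : ℂ)) *
          ∑' t : {t : ℕ // 0 < t ∧ QSmooth V t},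
            F t * (ramanujanSum ℓ t : ℂ) / (t : ℂ)))) := by
  classical
  have hℓ0 : ℓ ≠ 0 := hℓ.ne'
  obtain ⟨C, hC⟩ := hF (1/4) (by norm_num)
  have hC0 : 0 ≤ C := by
    have h := hC 1 one_pos
    rw [Nat.cast_one, Real.one_rpow, mul_one] at h
    exact (norm_nonneg _).trans h
  have hram : ∀ n : ℕ, ‖((ramanujanSum ℓ n : ℤ) : ℂ)‖ ≤ ∑ d ∈ ℓ.divisors, (d : ℝ) := by
    intro n
    rw [Complex.norm_intCast]
    have h2 : ((|ramanujanSum ℓ n| : ℤ) : ℝ) ≤ (((∑ d ∈ ℓ.divisors, (d:ℤ)) : ℤ) : ℝ) := by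
      exact_mod_cast ram_bound hℓ0 n
    rw [Int.cast_abs] at h2
    calc |((ramanujanSum ℓ n : ℤ) : ℝ)| ≤ (((∑ d ∈ ℓ.divisors, (d:ℤ)) : ℤ) : ℝ) := h2
      _ = ∑ d ∈ ℓ.divisors, (d : ℝ) := by push_cast; rfl
  set Bl : ℝ := ∑ d ∈ ℓ.divisors, (d : ℝ) with hBldef
  have hBl0 : (0:ℝ) ≤ Bl := Finset.sum_nonneg fun d _ => Nat.cast_nonneg d
  have hHb : ∀ s : ℕ, 0 < s →
      ‖F s * ((ramanujanSum ℓ s : ℤ) : ℂ)‖ ≤ C * Bl * (s:ℝ) ^ ((1:ℝ)/4) := by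
    intro s hs
    calc ‖F s * ((ramanujanSum ℓ s : ℤ) : ℂ)‖
        = ‖F s‖ * ‖((ramanujanSum ℓ s : ℤ) : ℂ)‖ := norm_mul _ _
      _ ≤ (C * (s:ℝ) ^ ((1:ℝ)/4)) * Bl :=
          mul_le_mul (hC s hs) (hram s) (norm_nonneg _)
            (mul_nonneg hC0 (Real.rpow_nonneg (Nat.cast_nonneg s) _))
      _ = C * Bl * (s:ℝ) ^ ((1:ℝ)/4) := by ring
  have hrpow_div : ∀ (n : ℕ), 0 < n → ∀ a : ℝ, (n:ℝ) ^ a / (n:ℝ) = (n:ℝ) ^ (a - 1) := by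
    intro n hn a
    have hn0 : (0:ℝ) < n := by exact_mod_cast hn
    rw [Real.rpow_sub hn0, Real.rpow_one]
  have hs34 := summable_smooth_rpow V (esig := (3:ℝ)/4) (by norm_num)
  have hs14 := summable_smooth_rpow V (esig := (1:ℝ)/4) (by norm_num)
  have hGsum : Summable (fun t : {t : ℕ // 0 < t ∧ QSmooth V t} =>
      F ↑t * ((ramanujanSum ℓ ↑t : ℤ) : ℂ) / ((t : ℕ) : ℂ)) := by
    apply Summable.of_norm
    refine Summable.of_nonneg_of_le (fun t => norm_nonneg _) (fun t => ?_)
      (hs34.mul_left (C * Bl))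
    have ht : 0 < (t : ℕ) := t.2.1
    have ht0 : (0:ℝ) < ((t:ℕ):ℝ) := by exact_mod_cast ht
    calc ‖F ↑t * ((ramanujanSum ℓ ↑t : ℤ) : ℂ) / ((t : ℕ) : ℂ)‖
        = ‖F ↑t * ((ramanujanSum ℓ ↑t : ℤ) : ℂ)‖ / ((t:ℕ):ℝ) := by
          rw [norm_div, Complex.norm_natCast]
      _ ≤ (C * Bl * ((t:ℕ):ℝ) ^ ((1:ℝ)/4)) / ((t:ℕ):ℝ) := by
          gcongr
          exact hHb _ ht
      _ = C * Bl * (((t:ℕ):ℝ) ^ ((1:ℝ)/4) / ((t:ℕ):ℝ)) := by ring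
      _ = C * Bl * ((t:ℕ):ℝ) ^ (-((3:ℝ)/4)) := by
          rw [hrpow_div _ ht]
          norm_num
  have hKsum : Summable (fun t : {t : ℕ // 0 < t ∧ QSmooth V t} =>
      ‖F ↑t * ((ramanujanSum ℓ ↑t : ℤ) : ℂ)‖ * ((t:ℕ):ℝ) ^ (-((1:ℝ)/2))) := by
    refine Summable.of_nonneg_of_le
      (fun t => mul_nonneg (norm_nonneg _) (Real.rpow_nonneg (Nat.cast_nonneg _) _))
      (fun t => ?_) (hs14.mul_left (C * Bl))
    have ht : 0 < (t : ℕ) := t.2.1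
    have ht0 : (0:ℝ) < ((t:ℕ):ℝ) := by exact_mod_cast ht
    calc ‖F ↑t * ((ramanujanSum ℓ ↑t : ℤ) : ℂ)‖ * ((t:ℕ):ℝ) ^ (-((1:ℝ)/2))
        ≤ (C * Bl * ((t:ℕ):ℝ) ^ ((1:ℝ)/4)) * ((t:ℕ):ℝ) ^ (-((1:ℝ)/2)) :=
          mul_le_mul_of_nonneg_right (hHb _ ht) (Real.rpow_nonneg (Nat.cast_nonneg _) _)
      _ = C * Bl * (((t:ℕ):ℝ) ^ ((1:ℝ)/4) * ((t:ℕ):ℝ) ^ (-((1:ℝ)/2))) := by ring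
      _ = C * Bl * ((t:ℕ):ℝ) ^ (-((1:ℝ)/4)) := by
          rw [← Real.rpow_add ht0]
          norm_num
  set K : ℝ := ∑' t : {t : ℕ // 0 < t ∧ QSmooth V t},
      ‖F ↑t * ((ramanujanSum ℓ ↑t : ℤ) : ℂ)‖ * ((t:ℕ):ℝ) ^ (-((1:ℝ)/2)) with hKdef
  have hK0 : 0 ≤ K :=
    tsum_nonneg fun t => mul_nonneg (norm_nonneg _) (Real.rpow_nonneg (Nat.cast_nonneg _) _)
  set Dl : ℝ := ((primor V).totient : ℝ) / (primor V) with hDl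
  have hP0 : (0:ℝ) < (primor V : ℝ) := by exact_mod_cast primor_pos V
  have hD0 : 0 ≤ Dl := by rw [hDl]; positivity
  have hD1 : Dl ≤ 1 := by
    rw [hDl, div_le_one hP0]
    exact_mod_cast Nat.totient_le (primor V)
  have repr : ∀ x : ℕ,
      (1 / (x : ℂ)) * ∑ a ∈ Finset.Icc 1 x,
          (∑ d ∈ a.divisors.filter (fun d => QSmooth V d), era F d) * (ramanujanSum ℓ a : ℂ) =
        (∑ s ∈ (Finset.Icc 1 x).subtype (fun t => 0 < t ∧ QSmooth V t),
          F ↑s * ((ramanujanSum ℓ ↑s : ℤ) : ℂ) *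
            ((Asift V (x / ↑s) : ℂ) / (x : ℂ) - (Dl : ℂ) / ((s : ℕ) : ℂ)))
        + (Dl : ℂ) * ∑ s ∈ (Finset.Icc 1 x).subtype (fun t => 0 < t ∧ QSmooth V t),
            F ↑s * ((ramanujanSum ℓ ↑s : ℤ) : ℂ) / ((s : ℕ) : ℂ) := by
    intro x
    rw [Sx_eq F hℓ0 hℓs x]
    have hfilter : (Finset.Icc 1 x).filter (fun s => QSmooth V s) =
        (Finset.Icc 1 x).filter (fun t => 0 < t ∧ QSmooth V t) := by
      refine Finset.filter_congr fun t ht => ?_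
      rw [Finset.mem_Icc] at ht
      constructor
      · intro h; exact ⟨by omega, h⟩
      · intro h; exact h.2
    rw [hfilter,
      ← Finset.sum_subtype_eq_sum_filter
        (fun s => (F s * ((ramanujanSum ℓ s : ℤ) : ℂ)) * ((Asift V (x / s) : ℕ) : ℂ)),
      Finset.mul_sum, Finset.mul_sum, ← Finset.sum_add_distrib]
    refine Finset.sum_congr rfl fun s _ => ?_
    ring
  have h1 : Filter.Tendsto (fun x : ℕ =>
      ∑ s ∈ (Finset.Icc 1 x).subtype (fun t => 0 < t ∧ QSmooth V t),
        F ↑s * ((ramanujanSum ℓ ↑s : ℤ) : ℂ) *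
          ((Asift V (x / ↑s) : ℂ) / (x : ℂ) - (Dl : ℂ) / ((s : ℕ) : ℂ)))
      Filter.atTop (nhds 0) := by
    apply squeeze_zero_norm'
      (a := fun x : ℕ => ((primor V : ℝ) + 2) * K * ((x:ℝ) ^ (-((1:ℝ)/2))))
    · filter_upwards [Filter.eventually_ge_atTop 1] with x hx
      have hx0 : (0:ℝ) < (x:ℝ) := by exact_mod_cast hx
      have key : ∀ s ∈ (Finset.Icc 1 x).subtype (fun t => 0 < t ∧ QSmooth V t),
          ‖F ↑s * ((ramanujanSum ℓ ↑s : ℤ) : ℂ) *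
            ((Asift V (x / ↑s) : ℂ) / (x : ℂ) - (Dl : ℂ) / ((s : ℕ) : ℂ))‖ ≤
          (‖F ↑s * ((ramanujanSum ℓ ↑s : ℤ) : ℂ)‖ * ((s:ℕ):ℝ) ^ (-((1:ℝ)/2))) *
            (((primor V : ℝ) + 2) * ((x:ℝ) ^ (-((1:ℝ)/2)))) := by
        intro s hs
        rw [Finset.mem_subtype, Finset.mem_Icc] at hs
        have hspos : 0 < (s : ℕ) := s.2.1
        have hs1 : (0:ℝ) < ((s:ℕ):ℝ) := by exact_mod_cast hspos
        have hsx : ((s:ℕ):ℝ) ≤ (x:ℝ) := by exact_mod_cast hs.2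
        have hcast : ((Asift V (x / ↑s) : ℕ) : ℂ) / (x : ℂ) - (Dl : ℂ) / ((s : ℕ) : ℂ) =
            ((((Asift V (x / ↑s) : ℕ) : ℝ) / (x:ℝ) - Dl / ((s:ℕ):ℝ) : ℝ) : ℂ) := by
          push_cast
          ring
        have hA := Asift_bound hV (x / (s : ℕ))
        rw [← hDl] at hA
        have hfl1 : ((x / (s:ℕ) : ℕ) : ℝ) ≤ (x:ℝ) / ((s:ℕ):ℝ) := Nat.cast_div_le
        have hfl2 : (x:ℝ) / ((s:ℕ):ℝ) ≤ ((x / (s:ℕ) : ℕ) : ℝ) + 1 := by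
          have h := (Nat.div_lt_iff_lt_mul hspos).mp (Nat.lt_succ_self (x / (s:ℕ)))
          have h' : (x:ℝ) < (((x / (s:ℕ) : ℕ) : ℝ) + 1) * ((s:ℕ):ℝ) := by
            exact_mod_cast h
          rw [div_le_iff₀ hs1]
          linarith
        have habs : |((Asift V (x / (s:ℕ)) : ℕ) : ℝ) - Dl * ((x:ℝ) / ((s:ℕ):ℝ))| ≤
            (primor V : ℝ) + 2 := by
          rw [abs_le] at hA ⊢
          have e1 : Dl * ((x / (s:ℕ) : ℕ) : ℝ) ≤ Dl * ((x:ℝ) / ((s:ℕ):ℝ)) :=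
            mul_le_mul_of_nonneg_left hfl1 hD0
          have e2 : Dl * ((x:ℝ) / ((s:ℕ):ℝ)) ≤ Dl * (((x / (s:ℕ) : ℕ) : ℝ) + 1) :=
            mul_le_mul_of_nonneg_left hfl2 hD0
          constructor <;> nlinarith [hA.1, hA.2]
        have herr : |((Asift V (x / (s:ℕ)) : ℕ) : ℝ) / (x:ℝ) - Dl / ((s:ℕ):ℝ)| ≤
            ((primor V : ℝ) + 2) / (x:ℝ) := by
          have hsplit : ((Asift V (x / (s:ℕ)) : ℕ) : ℝ) / (x:ℝ) - Dl / ((s:ℕ):ℝ) =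
              (((Asift V (x / (s:ℕ)) : ℕ) : ℝ) - Dl * ((x:ℝ) / ((s:ℕ):ℝ))) / (x:ℝ) := by
            field_simp
          rw [hsplit, abs_div, abs_of_pos hx0]
          gcongr
        have hxhalf : (x:ℝ) ^ ((1:ℝ)/2) / (x:ℝ) = (x:ℝ) ^ (-((1:ℝ)/2)) := by
          rw [hrpow_div x (by omega)]
          norm_num
        have hnorm1 : ‖F ↑s * ((ramanujanSum ℓ ↑s : ℤ) : ℂ)‖ ≤
            (‖F ↑s * ((ramanujanSum ℓ ↑s : ℤ) : ℂ)‖ * ((s:ℕ):ℝ) ^ (-((1:ℝ)/2))) *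
              (x:ℝ) ^ ((1:ℝ)/2) := by
          calc ‖F ↑s * ((ramanujanSum ℓ ↑s : ℤ) : ℂ)‖
              = (‖F ↑s * ((ramanujanSum ℓ ↑s : ℤ) : ℂ)‖ * ((s:ℕ):ℝ) ^ (-((1:ℝ)/2))) *
                ((s:ℕ):ℝ) ^ ((1:ℝ)/2) := by
                rw [mul_assoc, ← Real.rpow_add hs1,
                  show -((1:ℝ)/2) + (1:ℝ)/2 = 0 by norm_num, Real.rpow_zero, mul_one]
            _ ≤ (‖F ↑s * ((ramanujanSum ℓ ↑s : ℤ) : ℂ)‖ * ((s:ℕ):ℝ) ^ (-((1:ℝ)/2))) *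
                (x:ℝ) ^ ((1:ℝ)/2) :=
                mul_le_mul_of_nonneg_left
                  (Real.rpow_le_rpow (le_of_lt hs1) hsx (by norm_num))
                  (mul_nonneg (norm_nonneg _) (Real.rpow_nonneg (Nat.cast_nonneg _) _))
        calc ‖F ↑s * ((ramanujanSum ℓ ↑s : ℤ) : ℂ) *
              ((Asift V (x / ↑s) : ℂ) / (x : ℂ) - (Dl : ℂ) / ((s : ℕ) : ℂ))‖
            = ‖F ↑s * ((ramanujanSum ℓ ↑s : ℤ) : ℂ)‖ *
              ‖(Asift V (x / ↑s) : ℂ) / (x : ℂ) - (Dl : ℂ) / ((s : ℕ) : ℂ)‖ := norm_mul _ _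
          _ = ‖F ↑s * ((ramanujanSum ℓ ↑s : ℤ) : ℂ)‖ *
              |((Asift V (x / (s:ℕ)) : ℕ) : ℝ) / (x:ℝ) - Dl / ((s:ℕ):ℝ)| := by
              rw [hcast, Complex.norm_real, Real.norm_eq_abs]
          _ ≤ ((‖F ↑s * ((ramanujanSum ℓ ↑s : ℤ) : ℂ)‖ * ((s:ℕ):ℝ) ^ (-((1:ℝ)/2))) *
                (x:ℝ) ^ ((1:ℝ)/2)) * (((primor V : ℝ) + 2) / (x:ℝ)) := by
              refine mul_le_mul hnorm1 herr (abs_nonneg _) ?_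
              exact mul_nonneg (mul_nonneg (norm_nonneg _)
                (Real.rpow_nonneg (Nat.cast_nonneg _) _))
                (Real.rpow_nonneg (le_of_lt hx0) _)
          _ = (‖F ↑s * ((ramanujanSum ℓ ↑s : ℤ) : ℂ)‖ * ((s:ℕ):ℝ) ^ (-((1:ℝ)/2))) *
                (((primor V : ℝ) + 2) * ((x:ℝ) ^ ((1:ℝ)/2) / (x:ℝ))) := by ring
          _ = (‖F ↑s * ((ramanujanSum ℓ ↑s : ℤ) : ℂ)‖ * ((s:ℕ):ℝ) ^ (-((1:ℝ)/2))) *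
                (((primor V : ℝ) + 2) * ((x:ℝ) ^ (-((1:ℝ)/2)))) := by rw [hxhalf]
      calc ‖∑ s ∈ (Finset.Icc 1 x).subtype (fun t => 0 < t ∧ QSmooth V t),
              F ↑s * ((ramanujanSum ℓ ↑s : ℤ) : ℂ) *
                ((Asift V (x / ↑s) : ℂ) / (x : ℂ) - (Dl : ℂ) / ((s : ℕ) : ℂ))‖
          ≤ ∑ s ∈ (Finset.Icc 1 x).subtype (fun t => 0 < t ∧ QSmooth V t),
              ‖F ↑s * ((ramanujanSum ℓ ↑s : ℤ) : ℂ) *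
                ((Asift V (x / ↑s) : ℂ) / (x : ℂ) - (Dl : ℂ) / ((s : ℕ) : ℂ))‖ :=
            norm_sum_le _ _
        _ ≤ ∑ s ∈ (Finset.Icc 1 x).subtype (fun t => 0 < t ∧ QSmooth V t),
              (‖F ↑s * ((ramanujanSum ℓ ↑s : ℤ) : ℂ)‖ * ((s:ℕ):ℝ) ^ (-((1:ℝ)/2))) *
                (((primor V : ℝ) + 2) * ((x:ℝ) ^ (-((1:ℝ)/2)))) :=
            Finset.sum_le_sum key
        _ = (∑ s ∈ (Finset.Icc 1 x).subtype (fun t => 0 < t ∧ QSmooth V t),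
              ‖F ↑s * ((ramanujanSum ℓ ↑s : ℤ) : ℂ)‖ * ((s:ℕ):ℝ) ^ (-((1:ℝ)/2))) *
                (((primor V : ℝ) + 2) * ((x:ℝ) ^ (-((1:ℝ)/2)))) :=
            (Finset.sum_mul _ _ _).symm
        _ ≤ K * (((primor V : ℝ) + 2) * ((x:ℝ) ^ (-((1:ℝ)/2)))) := by
            refine mul_le_mul_of_nonneg_right ?_ (by positivity)
            exact Summable.sum_le_tsum _ (fun t _ => mul_nonneg (norm_nonneg _)
              (Real.rpow_nonneg (Nat.cast_nonneg _) _)) hKsum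
        _ = ((primor V : ℝ) + 2) * K * ((x:ℝ) ^ (-((1:ℝ)/2))) := by ring
    · have hbase : Filter.Tendsto (fun n : ℕ => ((n:ℝ) ^ (-((1:ℝ)/2))))
          Filter.atTop (nhds 0) :=
        (tendsto_rpow_neg_atTop (by norm_num)).comp tendsto_natCast_atTop_atTop
      have := hbase.const_mul (((primor V : ℝ) + 2) * K)
      simpa using this
  have h2 := (tendsto_sum_Icc_subtype (p := fun t => 0 < t ∧ QSmooth V t)
    (fun t ht => ht.1) hGsum).const_mul ((Dl : ℝ) : ℂ)
  have maintend : Filter.Tendsto (fun x : ℕ => (1 / (x : ℂ)) *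
      ∑ a ∈ Finset.Icc 1 x,
        (∑ d ∈ a.divisors.filter (fun d => QSmooth V d), era F d) * (ramanujanSum ℓ a : ℂ))
      Filter.atTop (nhds (((Dl : ℝ) : ℂ) *
        ∑' t : {t : ℕ // 0 < t ∧ QSmooth V t},
          F ↑t * ((ramanujanSum ℓ ↑t : ℤ) : ℂ) / ((t : ℕ) : ℂ))) := by
    have hsum := h1.add h2
    rw [zero_add] at hsum
    exact Filter.Tendsto.congr (fun x => (repr x).symm) hsum
  have final := maintend.const_mul (1 / ((ℓ.totient : ℕ) : ℂ))
  have hprodeq : (∏ p ∈ (Finset.range (V + 1)).filter Nat.Prime, (1 - 1 / (p : ℂ))) =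
      ((Dl : ℝ) : ℂ) := by
    have hid : (Finset.range (V + 1)).filter Nat.Prime = Nat.primesBelow (V + 1) := rfl
    rw [hid, prod_one_sub_inv hV, hDl]
    push_cast
    rfl
  rw [hprodeq]
  have hcomm : ((Dl : ℝ) : ℂ) *
      ((1 / ((ℓ.totient : ℕ) : ℂ)) * ∑' t : {t : ℕ // 0 < t ∧ QSmooth V t},
        F ↑t * ((ramanujanSum ℓ ↑t : ℤ) : ℂ) / ((t : ℕ) : ℂ)) =
      (1 / ((ℓ.totient : ℕ) : ℂ)) * (((Dl : ℝ) : ℂ) *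
        ∑' t : {t : ℕ // 0 < t ∧ QSmooth V t},
          F ↑t * ((ramanujanSum ℓ ↑t : ℤ) : ℂ) / ((t : ℕ) : ℂ)) := by ring
  rw [hcomm]
  exact final
end

section
/- Let F : ℕ → ℂ satisfy F(n) ≪_ε n^ε and fix an integer V > 1. Then for all a ∈ ℕ, F_{(V)}(a) = ∑_{ℓ V-smooth} ( ∑_{d V-smooth, ℓ | d} F'(d)/d ) c_ℓ(a), the outer series converging (pointwise Ramanujan expansion of the smooth restriction with Wintner coefficients). In particular, if a itself is V-smooth, then F(a) equals this sum. -/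
set_option maxHeartbeats 1000000

open scoped BigOperators
open ArithmeticFunction

section Helpers

lemma qsmooth_of_dvd_s13 {V d ℓ : ℕ} (hd : d ≠ 0) (h : QSmooth V d) (hdvd : ℓ ∣ d) : QSmooth V ℓ :=
  fun p hp => h p (Nat.primeFactors_mono hdvd hd hp)

lemma moebius_norm_le (n : ℕ) : ‖((moebius n : ℤ) : ℂ)‖ ≤ 1 := by
  by_cases h : Squarefree n
  · rw [moebius_apply_of_squarefree h]; push_cast
    rw [norm_pow, norm_neg, norm_one, one_pow]
  · simp [moebius_eq_zero_of_not_squarefree h]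

lemma smooth_set_eq (V : ℕ) : {d : ℕ | 0 < d ∧ QSmooth V d} = (V + 1).smoothNumbers := by
  ext n
  simp only [Set.mem_setOf_eq, Nat.mem_smoothNumbers, QSmooth, Nat.lt_succ_iff,
    Nat.pos_iff_ne_zero]
  constructor
  · rintro ⟨hn, h⟩
    exact ⟨hn, fun p hp => h p (by
      rw [Nat.mem_primeFactors]
      exact ⟨Nat.prime_of_mem_primeFactorsList hp, Nat.dvd_of_mem_primeFactorsList hp, hn⟩)⟩
  · rintro ⟨hn, h⟩
    refine ⟨hn, fun p hp => h p ?_⟩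
    rw [Nat.mem_primeFactors] at hp
    exact (Nat.mem_primeFactorsList hn).mpr ⟨hp.1, hp.2.1⟩

lemma gcd_divisors_eq (ℓ a : ℕ) (hl : ℓ ≠ 0) :
    (Nat.gcd ℓ a).divisors = ℓ.divisors.filter (· ∣ a) := by
  ext e
  simp only [Nat.mem_divisors, Finset.mem_filter, Nat.dvd_gcd_iff]
  constructor
  · rintro ⟨⟨h1, h2⟩, _⟩; exact ⟨⟨h1, hl⟩, h2⟩
  · rintro ⟨⟨h1, _⟩, h2⟩
    exact ⟨⟨h1, h2⟩, fun h => hl (Nat.eq_zero_of_gcd_eq_zero_left h)⟩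

noncomputable def divInd (a : ℕ) : ArithmeticFunction ℤ :=
  ⟨fun e => if e ∣ a then (e : ℤ) else 0, by simp⟩

lemma divInd_apply (a e : ℕ) : divInd a e = if e ∣ a then (e : ℤ) else 0 := rfl

lemma ramanujanSum_eq_mul (a : ℕ) {ℓ : ℕ} (hl : ℓ ≠ 0) :
    ramanujanSum ℓ a = (divInd a * (moebius : ArithmeticFunction ℤ)) ℓ := by
  rw [ArithmeticFunction.mul_apply,
    Nat.sum_divisorsAntidiagonal (fun x y => divInd a x * moebius y),
    ramanujanSum, gcd_divisors_eq ℓ a hl, Finset.sum_filter]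
  refine Finset.sum_congr rfl fun e he => ?_
  rw [divInd_apply]
  split_ifs <;> simp

lemma sum_ramanujan_divisors (a : ℕ) (d : ℕ) (hd : 0 < d) :
    ∑ ℓ ∈ d.divisors, ramanujanSum ℓ a = if d ∣ a then (d : ℤ) else 0 := by
  have h1 : ∑ ℓ ∈ d.divisors, ramanujanSum ℓ a
      = ∑ ℓ ∈ d.divisors, (divInd a * (moebius : ArithmeticFunction ℤ)) ℓ :=
    Finset.sum_congr rfl fun ℓ hℓ => ramanujanSum_eq_mul a (Nat.pos_of_mem_divisors hℓ).ne'
  rw [h1, ← ArithmeticFunction.coe_mul_zeta_apply, mul_assoc, moebius_mul_coe_zeta, mul_one,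
    divInd_apply]

noncomputable def Fext (F : ℕ → ℂ) : ArithmeticFunction ℂ :=
  ⟨fun n => if n = 0 then 0 else F n, by simp⟩

lemma era_eq_mul (F : ℕ → ℂ) (d : ℕ) :
    era F d = (Fext F * (moebius : ArithmeticFunction ℤ)) d := by
  rw [ArithmeticFunction.mul_apply,
    Nat.sum_divisorsAntidiagonal
      (fun x y => (Fext F) x * (((moebius : ArithmeticFunction ℤ) : ArithmeticFunction ℂ)) y),
    era]
  refine Finset.sum_congr rfl fun t ht => ?_
  have : (Fext F) t = F t := by
    simp [Fext, (Nat.pos_of_mem_divisors ht).ne']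
  rw [this, intCoe_apply]

lemma sum_era_divisors (F : ℕ → ℂ) {a : ℕ} (ha : 0 < a) :
    ∑ d ∈ a.divisors, era F d = F a := by
  have h1 : ∑ d ∈ a.divisors, era F d
      = ∑ d ∈ a.divisors, (Fext F * (moebius : ArithmeticFunction ℤ)) d :=
    Finset.sum_congr rfl fun d _ => era_eq_mul F d
  rw [h1, ← ArithmeticFunction.coe_mul_zeta_apply, mul_assoc, coe_moebius_mul_coe_zeta, mul_one]
  simp [Fext, ha.ne']

lemma ramanujanSum_norm_le {a : ℕ} (ha : 0 < a) (ℓ : ℕ) :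
    ‖((ramanujanSum ℓ a : ℤ) : ℂ)‖ ≤ ∑ e ∈ a.divisors, (e : ℝ) := by
  rw [ramanujanSum]
  push_cast
  refine le_trans (norm_sum_le _ _) ?_
  have h1 : ∀ e ∈ (Nat.gcd ℓ a).divisors, ‖(e : ℂ) * ((moebius (ℓ / e) : ℤ) : ℂ)‖ ≤ (e : ℝ) := by
    intro e he
    rw [norm_mul]
    calc ‖(e : ℂ)‖ * ‖((moebius (ℓ / e) : ℤ) : ℂ)‖ ≤ ‖(e : ℂ)‖ * 1 :=
          mul_le_mul_of_nonneg_left (moebius_norm_le _) (norm_nonneg _)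
      _ = (e : ℝ) := by rw [mul_one, Complex.norm_natCast]
  refine le_trans (Finset.sum_le_sum h1) ?_
  exact Finset.sum_le_sum_of_subset_of_nonneg
    (Nat.divisors_subset_of_dvd ha.ne' (Nat.gcd_dvd_right ℓ a)) (fun i _ _ => by positivity)

lemma era_norm_le {F : ℕ → ℂ} {C : ℝ}
    (hF : ∀ n : ℕ, 0 < n → ‖F n‖ ≤ C * (n : ℝ) ^ (1/2 : ℝ)) {d : ℕ} (hd : 0 < d) (hC : 0 ≤ C) :
    ‖era F d‖ ≤ (d.divisors.card : ℝ) * (C * (d : ℝ) ^ (1/2 : ℝ)) := by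
  rw [era]
  refine le_trans (norm_sum_le _ _) ?_
  have h1 : ∀ t ∈ d.divisors, ‖F t * ((moebius (d / t) : ℤ) : ℂ)‖ ≤ C * (d : ℝ) ^ (1/2 : ℝ) := by
    intro t ht
    rw [norm_mul]
    have htpos := Nat.pos_of_mem_divisors ht
    have htd : (t : ℝ) ≤ (d : ℝ) := Nat.cast_le.mpr (Nat.le_of_dvd hd (Nat.dvd_of_mem_divisors ht))
    calc ‖F t‖ * ‖((moebius (d / t) : ℤ) : ℂ)‖ ≤ ‖F t‖ * 1 :=
          mul_le_mul_of_nonneg_left (moebius_norm_le _) (norm_nonneg _)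
      _ ≤ C * (t : ℝ) ^ (1/2 : ℝ) := by rw [mul_one]; exact hF t htpos
      _ ≤ C * (d : ℝ) ^ (1/2 : ℝ) :=
          mul_le_mul_of_nonneg_left
            (Real.rpow_le_rpow (Nat.cast_nonneg t) htd (by norm_num)) hC
  refine le_trans (Finset.sum_le_sum h1) ?_
  rw [Finset.sum_const, nsmul_eq_mul]

noncomputable def wgt (n : ℕ) : ℝ := (n.divisors.card : ℝ) ^ 2 * (n : ℝ) ^ (-(1/2) : ℝ)

lemma wgt_nonneg (n : ℕ) : 0 ≤ wgt n := by unfold wgt; positivity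

lemma wgt_one : wgt 1 = 1 := by simp [wgt]

lemma wgt_zero : wgt 0 = 0 := by simp [wgt]

lemma wgt_mul {m n : ℕ} (h : m.Coprime n) : wgt (m * n) = wgt m * wgt n := by
  rcases eq_or_ne m 0 with rfl | hm
  · rcases Nat.coprime_zero_left n |>.mp h with rfl
    simp [wgt_zero, wgt_one]
  rcases eq_or_ne n 0 with rfl | hn
  · rcases Nat.coprime_zero_right m |>.mp h with rfl
    simp [wgt_zero, wgt_one]
  unfold wgt
  rw [h.card_divisors_mul]
  push_cast
  rw [Real.mul_rpow (Nat.cast_nonneg m) (Nat.cast_nonneg n)]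
  ring

lemma wgt_prime_pow_summable {p : ℕ} (hp : p.Prime) :
    Summable (fun k : ℕ => ‖wgt (p ^ k)‖) := by
  have hr0 : (0 : ℝ) ≤ (p : ℝ) ^ (-(1/2) : ℝ) := Real.rpow_nonneg (Nat.cast_nonneg p) _
  have hr1 : (p : ℝ) ^ (-(1/2) : ℝ) < 1 :=
    Real.rpow_lt_one_of_one_lt_of_neg (by exact_mod_cast hp.one_lt) (by norm_num)
  set r : ℝ := (p : ℝ) ^ (-(1/2) : ℝ) with hr
  have hval : ∀ k : ℕ, wgt (p ^ k) = ((k : ℝ) + 1) ^ 2 * r ^ k := by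
    intro k
    have hcard : ((p ^ k).divisors.card) = k + 1 := by
      rw [Nat.divisors_prime_pow hp]; simp
    have hpow : ((p ^ k : ℕ) : ℝ) ^ (-(1/2) : ℝ) = r ^ k := by
      rw [hr]
      push_cast
      rw [← Real.rpow_natCast ((p : ℝ) ^ (-(1/2) : ℝ)) k, ← Real.rpow_natCast (p : ℝ) k,
        ← Real.rpow_mul (Nat.cast_nonneg p), ← Real.rpow_mul (Nat.cast_nonneg p)]
      ring_nf
    rw [wgt, hcard, hpow]
    push_cast
    ring
  have hsum : Summable (fun k : ℕ => ((k : ℝ) + 1) ^ 2 * r ^ k) := by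
    have h2 : Summable (fun k : ℕ => (k : ℝ) ^ 2 * r ^ k) :=
      summable_pow_mul_geometric_of_norm_lt_one 2 (by rwa [Real.norm_of_nonneg hr0])
    have h1 : Summable (fun k : ℕ => (k : ℝ) ^ 1 * r ^ k) :=
      summable_pow_mul_geometric_of_norm_lt_one 1 (by rwa [Real.norm_of_nonneg hr0])
    have h0 : Summable (fun k : ℕ => r ^ k) := summable_geometric_of_lt_one hr0 hr1
    refine (h2.add ((h1.mul_left 2).add h0)).congr fun k => ?_
    ring
  refine hsum.congr fun k => ?_
  rw [Real.norm_of_nonneg (wgt_nonneg _), hval k]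

lemma summable_wgt_smooth (V : ℕ) :
    Summable (fun d : {d : ℕ // 0 < d ∧ QSmooth V d} => wgt d) := by
  have h := (EulerProduct.summable_and_hasSum_smoothNumbers_prod_primesBelow_tsum
    (f := wgt) wgt_one (fun {m n} h => wgt_mul h)
    (fun {p} hp => wgt_prime_pow_summable hp) (V + 1)).1
  have h2 : Summable ((fun n => ‖wgt n‖) ∘ (Subtype.val : (V+1).smoothNumbers → ℕ)) := h
  rw [summable_subtype_iff_indicator, ← smooth_set_eq V,
    ← summable_subtype_iff_indicator] at h2
  refine h2.congr fun d => ?_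
  exact Real.norm_of_nonneg (wgt_nonneg _)

/-- Reindexing the double sum. -/
def sigEquiv (V : ℕ) :
    (Σ ℓ : {ℓ : ℕ // 0 < ℓ ∧ QSmooth V ℓ},
      {d : ℕ // 0 < d ∧ QSmooth V d ∧ (ℓ : ℕ) ∣ d}) ≃
    (Σ d : {d : ℕ // 0 < d ∧ QSmooth V d}, {ℓ : ℕ // ℓ ∈ (d : ℕ).divisors}) where
  toFun x := ⟨⟨x.2.1, x.2.2.1, x.2.2.2.1⟩,
    ⟨x.1.1, Nat.mem_divisors.mpr ⟨x.2.2.2.2, x.2.2.1.ne'⟩⟩⟩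
  invFun y := ⟨⟨y.2.1, Nat.pos_of_mem_divisors y.2.2,
      qsmooth_of_dvd_s13 y.1.2.1.ne' y.1.2.2 (Nat.dvd_of_mem_divisors y.2.2)⟩,
    ⟨y.1.1, y.1.2.1, y.1.2.2, Nat.dvd_of_mem_divisors y.2.2⟩⟩
  left_inv _ := rfl
  right_inv _ := rfl

end Helpers

/-- Pointwise Ramanujan expansion of the `V`-smooth restriction with Wintner
coefficients; in particular `F(a)` equals the expansion for `V`-smooth `a`. -/
theorem ramanujan_expansion_smooth_restriction (F : ℕ → ℂ)
    (hF : ∀ ε : ℝ, 0 < ε → ∃ C : ℝ, ∀ n : ℕ, 0 < n → ‖F n‖ ≤ C * (n : ℝ) ^ ε)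
    (V : ℕ) (hV : 1 < V) (a : ℕ) (ha : 0 < a) :
    HasSum (fun ℓ : {ℓ : ℕ // 0 < ℓ ∧ QSmooth V ℓ} =>
        (∑' d : {d : ℕ // 0 < d ∧ QSmooth V d ∧ (ℓ : ℕ) ∣ d}, era F d / (d : ℂ)) *
          (ramanujanSum ℓ a : ℂ))
      (∑ d ∈ a.divisors.filter (fun d => QSmooth V d), era F d) ∧
    (QSmooth V a →
      (∑ d ∈ a.divisors.filter (fun d => QSmooth V d), era F d) = F a) := by
  classical
  constructor
  · -- main HasSum statement
    obtain ⟨C₀, hC₀⟩ := hF (1/2) (by norm_num)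
    have hFC : ∀ n : ℕ, 0 < n → ‖F n‖ ≤ (max C₀ 0) * (n : ℝ) ^ (1/2 : ℝ) := fun n hn =>
      (hC₀ n hn).trans (mul_le_mul_of_nonneg_right (le_max_left _ _) (by positivity))
    set C : ℝ := max C₀ 0 with hCdef
    have hC : 0 ≤ C := le_max_right _ _
    set σa : ℝ := ∑ e ∈ a.divisors, (e : ℝ) with hσa
    have hσa0 : 0 ≤ σa := Finset.sum_nonneg fun i _ => by positivity
    -- bound on the summand over smooth d
    have hbd1 : ∀ d : ℕ, 0 < d →
        ‖era F d / (d : ℂ)‖ ≤ C * ((d.divisors.card : ℝ) * (d : ℝ) ^ (-(1/2) : ℝ)) := by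
      intro d hd
      have hdC : (0:ℝ) < (d:ℝ) := by exact_mod_cast hd
      rw [norm_div, Complex.norm_natCast, div_le_iff₀ hdC]
      refine (era_norm_le hFC hd hC).trans (le_of_eq ?_)
      have hrp : (d : ℝ) ^ (-(1/2) : ℝ) * (d:ℝ) = (d : ℝ) ^ (1/2 : ℝ) := by
        calc (d:ℝ)^(-(1/2):ℝ) * (d:ℝ) = (d:ℝ)^(-(1/2):ℝ) * (d:ℝ)^(1:ℝ) := by
              rw [Real.rpow_one]
          _ = (d:ℝ)^((-(1/2):ℝ)+1) := (Real.rpow_add hdC _ _).symm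
          _ = (d : ℝ) ^ (1/2 : ℝ) := by norm_num
      rw [← hrp]; ring
    have hcard1 : ∀ d : ℕ, 0 < d → (1 : ℝ) ≤ (d.divisors.card : ℝ) := by
      intro d hd
      have : 0 < d.divisors.card := Finset.card_pos.mpr ⟨1, Nat.one_mem_divisors.mpr hd.ne'⟩
      exact_mod_cast this
    have hbd2 : ∀ d : ℕ, 0 < d →
        C * ((d.divisors.card : ℝ) * (d : ℝ) ^ (-(1/2) : ℝ)) ≤ C * wgt d := by
      intro d hd
      rw [wgt]
      refine mul_le_mul_of_nonneg_left ?_ hC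
      refine mul_le_mul_of_nonneg_right ?_ (by positivity)
      nlinarith [hcard1 d hd]
    -- summability of era/d over all smooth d
    have hS : Summable (fun d : {d : ℕ // 0 < d ∧ QSmooth V d} => era F d / ((d : ℕ) : ℂ)) := by
      refine Summable.of_norm ?_
      exact Summable.of_nonneg_of_le (fun d => norm_nonneg _)
        (fun d => (hbd1 d.1 d.2.1).trans (hbd2 d.1 d.2.1)) ((summable_wgt_smooth V).mul_left C)
    -- the sigma-type function over (d, ℓ ∣ d)
    set G2 : (Σ d : {d : ℕ // 0 < d ∧ QSmooth V d}, {ℓ : ℕ // ℓ ∈ (d : ℕ).divisors}) → ℂ :=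
      fun y => era F y.1 / ((y.1 : ℕ) : ℂ) * ((ramanujanSum y.2 a : ℤ) : ℂ) with hG2def
    have hG2norm : Summable (fun y => ‖G2 y‖) := by
      rw [summable_sigma_of_nonneg (fun y => norm_nonneg _)]
      refine ⟨fun d => Summable.of_finite, ?_⟩
      refine Summable.of_nonneg_of_le (fun d => tsum_nonneg fun ℓ => norm_nonneg _)
        (fun d => ?_) (((summable_wgt_smooth V).mul_left (C * σa)))
      rw [tsum_fintype]
      have hterm : ∀ ℓ : {ℓ : ℕ // ℓ ∈ (d : ℕ).divisors},
          ‖G2 ⟨d, ℓ⟩‖ ≤ C * (((d:ℕ).divisors.card : ℝ) * ((d:ℕ) : ℝ) ^ (-(1/2) : ℝ)) * σa := by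
        intro ℓ
        rw [hG2def, norm_mul]
        exact mul_le_mul (hbd1 d.1 d.2.1) (ramanujanSum_norm_le ha _) (norm_nonneg _)
          (by positivity)
      calc ∑ ℓ : {ℓ : ℕ // ℓ ∈ (d : ℕ).divisors}, ‖G2 ⟨d, ℓ⟩‖
          ≤ ∑ _ℓ : {ℓ : ℕ // ℓ ∈ (d : ℕ).divisors},
            C * (((d:ℕ).divisors.card : ℝ) * ((d:ℕ) : ℝ) ^ (-(1/2) : ℝ)) * σa :=
            Finset.sum_le_sum (fun ℓ _ => hterm ℓ)
        _ = ((d:ℕ).divisors.card : ℝ) *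
            (C * (((d:ℕ).divisors.card : ℝ) * ((d:ℕ) : ℝ) ^ (-(1/2) : ℝ)) * σa) := by
            rw [Finset.sum_const, Finset.card_univ, Fintype.card_coe, nsmul_eq_mul]
        _ = C * σa * wgt (d:ℕ) := by rw [wgt]; ring
    have hG2sum : Summable G2 := hG2norm.of_norm
    have hGsum : Summable (G2 ∘ (sigEquiv V)) := (sigEquiv V).summable_iff.mpr hG2sum
    -- value of the total sum
    have htot : ∑' y, G2 y = ∑ d ∈ a.divisors.filter (fun d => QSmooth V d), era F d := by
      rw [hG2sum.tsum_sigma]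
      have hinner : ∀ d : {d : ℕ // 0 < d ∧ QSmooth V d},
          ∑' ℓ : {ℓ : ℕ // ℓ ∈ (d : ℕ).divisors}, G2 ⟨d, ℓ⟩
            = (if (d : ℕ) ∣ a then era F (d : ℕ) else 0) := by
        intro d
        rw [tsum_fintype]
        have h1 : ∑ ℓ : {ℓ : ℕ // ℓ ∈ (d : ℕ).divisors}, G2 ⟨d, ℓ⟩
            = ∑ ℓ ∈ (d : ℕ).divisors,
                era F (d:ℕ) / ((d:ℕ) : ℂ) * ((ramanujanSum ℓ a : ℤ) : ℂ) := by
          exact Finset.sum_coe_sort ((d : ℕ).divisors)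
            (fun ℓ => era F (d:ℕ) / ((d:ℕ) : ℂ) * ((ramanujanSum ℓ a : ℤ) : ℂ))
        rw [h1, ← Finset.mul_sum]
        have h2 : ∑ ℓ ∈ (d : ℕ).divisors, ((ramanujanSum ℓ a : ℤ) : ℂ)
            = if (d : ℕ) ∣ a then (((d:ℕ)) : ℂ) else 0 := by
          rw [← Int.cast_sum, sum_ramanujan_divisors a (d:ℕ) d.2.1]
          split_ifs <;> simp
        rw [h2]
        split_ifs with h
        · rw [div_mul_cancel₀]
          exact Nat.cast_ne_zero.mpr d.2.1.ne'
        · rw [mul_zero]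
      rw [tsum_congr hinner]
      have hemb : ∀ x : {n : ℕ // n ∈ a.divisors.filter (fun d => QSmooth V d)},
          0 < x.1 ∧ QSmooth V x.1 := fun x =>
        ⟨Nat.pos_of_mem_divisors (Finset.mem_filter.mp x.2).1, (Finset.mem_filter.mp x.2).2⟩
      let emb : {n : ℕ // n ∈ a.divisors.filter (fun d => QSmooth V d)} ↪
          {d : ℕ // 0 < d ∧ QSmooth V d} :=
        ⟨fun x => ⟨x.1, hemb x⟩, fun x y hxy => by
          apply Subtype.ext
          have h2 := congrArg (Subtype.val) hxy
          exact h2⟩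
      rw [tsum_eq_sum
        (s := (a.divisors.filter (fun d => QSmooth V d)).attach.map emb) ?h0]
      case h0 =>
        intro b hb
        rw [if_neg]
        intro hdvd
        apply hb
        have hbmem : b.1 ∈ a.divisors.filter (fun d => QSmooth V d) :=
          Finset.mem_filter.mpr ⟨Nat.mem_divisors.mpr ⟨hdvd, ha.ne'⟩, b.2.2⟩
        exact Finset.mem_map.mpr ⟨⟨b.1, hbmem⟩, Finset.mem_attach _ _, Subtype.ext rfl⟩
      rw [Finset.sum_map,
        ← Finset.sum_attach (a.divisors.filter (fun d => QSmooth V d)) (fun d => era F d)]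
      refine Finset.sum_congr rfl fun x _ => ?_
      have hx : (x.1 : ℕ) ∣ a := Nat.dvd_of_mem_divisors (Finset.mem_filter.mp x.2).1
      simp only [emb, Function.Embedding.coeFn_mk, if_pos hx]
      exact if_pos hx
    have htotG : HasSum (G2 ∘ (sigEquiv V))
        (∑ d ∈ a.divisors.filter (fun d => QSmooth V d), era F d) := by
      have := hGsum.hasSum
      rwa [show ∑' x, (G2 ∘ (sigEquiv V)) x = ∑' y, G2 y from (sigEquiv V).tsum_eq G2,
        htot] at this
    refine HasSum.sigma htotG ?_
    intro ℓ
    have hinj : Function.Injective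
        (fun d : {d : ℕ // 0 < d ∧ QSmooth V d ∧ (ℓ : ℕ) ∣ d} =>
          (⟨d.1, d.2.1, d.2.2.1⟩ : {d : ℕ // 0 < d ∧ QSmooth V d})) :=
      fun x y h => by
        apply Subtype.ext
        have h2 := congrArg (Subtype.val) h
        exact h2
    have hsd : Summable (fun d : {d : ℕ // 0 < d ∧ QSmooth V d ∧ (ℓ : ℕ) ∣ d} =>
        era F d / ((d : ℕ) : ℂ)) :=
      hS.comp_injective (i := fun d : {d : ℕ // 0 < d ∧ QSmooth V d ∧ (ℓ : ℕ) ∣ d} =>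
        (⟨d.1, d.2.1, d.2.2.1⟩ : {d : ℕ // 0 < d ∧ QSmooth V d})) hinj
    exact hsd.hasSum.mul_right _
  · intro hsa
    rw [Finset.filter_true_of_mem
      (fun d hd => qsmooth_of_dvd_s13 ha.ne' hsa (Nat.dvd_of_mem_divisors hd)),
      sum_era_divisors F ha]
end

section
/- Let F : ℕ → ℂ satisfy F(n) ≪_ε n^ε and fix an integer V > 1. Then the Ramanujan coefficients R(ℓ) = ∑_{d V-smooth, ℓ|d} F'(d)/d satisfy the dual Delange condition ∑_{ℓ=1}^∞ 2^{ω(ℓ)} |R(ℓ)| < ∞. -/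
/-!
Over the `V`-smooth numbers every Dirichlet series `∑ n^{-σ}` with `σ > 0` converges (it is a
finite Euler product of geometric series), and `ω(ℓ)` is bounded by the number of primes `≤ V`.
Writing `‖F(t)‖ ≤ C t^{1/8} ≤ C d^{1/4} t^{-1/8}` for `t ∣ d` and bounding `∑_{t ∣ d} t^{-1/8}`
by the full smooth series gives `|F'(d)|/d ≪ d^{-3/4}` on smooth `d`. Splitting
`d^{-3/4} ≤ ℓ^{-1/4} d^{-1/2}` for `ℓ ∣ d` then gives `|R(ℓ)| ≪ ℓ^{-1/4}`, which is summable over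
the smooth `ℓ`; all other `R(ℓ)` vanish.
-/

open scoped BigOperators
open ArithmeticFunction

lemma summable_rpow_neg_smoothNumbers (N : ℕ) {σ : ℝ} (hσ : 0 < σ) :
    Summable (fun m : N.smoothNumbers => (m : ℝ) ^ (-σ)) := by
  have hmul {m n : ℕ} : ((m * n : ℕ) : ℝ) ^ (-σ) = (m : ℝ) ^ (-σ) * (n : ℝ) ^ (-σ) := by
    push_cast
    exact Real.mul_rpow (Nat.cast_nonneg m) (Nat.cast_nonneg n)
  have hgeom {p : ℕ} (hp : p.Prime) : Summable (fun k : ℕ => ‖((p ^ k : ℕ) : ℝ) ^ (-σ)‖) := by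
    have hpow (k : ℕ) : ‖((p ^ k : ℕ) : ℝ) ^ (-σ)‖ = ((p : ℝ) ^ (-σ)) ^ k := by
      rw [Real.norm_of_nonneg (by positivity), Nat.cast_pow, ← Real.rpow_natCast,
        ← Real.rpow_natCast, ← Real.rpow_mul (Nat.cast_nonneg p),
        ← Real.rpow_mul (Nat.cast_nonneg p), mul_comm]
    simp only [hpow]
    exact summable_geometric_of_lt_one (by positivity)
      (Real.rpow_lt_one_of_one_lt_of_neg (by exact_mod_cast hp.one_lt) (neg_neg_iff_pos.mpr hσ))
  refine ((EulerProduct.summable_and_hasSum_smoothNumbers_prod_primesBelow_tsum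
    (f := fun n : ℕ => (n : ℝ) ^ (-σ)) (by simp) (fun _ => hmul) hgeom N).1).congr fun m => ?_
  exact Real.norm_of_nonneg (by positivity)

lemma summable_rpow_neg_of_subset_smoothNumbers {N : ℕ} {s : Set ℕ} (hs : s ⊆ N.smoothNumbers)
    {σ : ℝ} (hσ : 0 < σ) : Summable (fun m : s => (m : ℝ) ^ (-σ)) :=
  (summable_rpow_neg_smoothNumbers N hσ).comp_injective (i := Set.inclusion hs)
    (Set.inclusion_injective hs)

lemma tsum_rpow_neg_le_of_subset_smoothNumbers {N : ℕ} {s : Set ℕ} (hs : s ⊆ N.smoothNumbers)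
    {σ : ℝ} (hσ : 0 < σ) :
    ∑' m : s, (m : ℝ) ^ (-σ) ≤ ∑' m : N.smoothNumbers, (m : ℝ) ^ (-σ) :=
  tsum_comp_le_tsum_of_inj (summable_rpow_neg_smoothNumbers N hσ) (fun _ => by positivity)
    (Set.inclusion_injective hs)

lemma sum_divisors_rpow_neg_le_tsum_smoothNumbers {N d : ℕ} (hd : d ∈ N.smoothNumbers)
    {σ : ℝ} (hσ : 0 < σ) :
    ∑ t ∈ d.divisors, (t : ℝ) ^ (-σ) ≤ ∑' m : N.smoothNumbers, (m : ℝ) ^ (-σ) := by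
  rw [← Finset.tsum_subtype]
  exact tsum_rpow_neg_le_of_subset_smoothNumbers
    (fun t ht => Nat.mem_smoothNumbers_of_dvd hd (Nat.mem_divisors.mp ht).1) hσ

lemma mem_smoothNumbers_succ_iff {V d : ℕ} : d ∈ (V + 1).smoothNumbers ↔ 0 < d ∧ QSmooth V d := by
  rw [Nat.mem_smoothNumbers_iff_primeFactors_subset, Nat.pos_iff_ne_zero]
  refine and_congr_right fun hd => ⟨fun h p hp => ?_, fun h p hp => ?_⟩
  · exact Nat.lt_succ_iff.mp (Finset.mem_range.mp (Finset.mem_filter.mp (h hp)).1)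
  · exact Finset.mem_filter.mpr
      ⟨Finset.mem_range.mpr (Nat.lt_succ_of_le (h p hp)), Nat.prime_of_mem_primeFactors hp⟩

lemma card_primeFactors_le_of_mem_smoothNumbers {N ℓ : ℕ} (hℓ : ℓ ∈ N.smoothNumbers) :
    ℓ.primeFactors.card ≤ N :=
  calc ℓ.primeFactors.card ≤ N.primesBelow.card :=
        Finset.card_le_card (Nat.primeFactors_subset_of_mem_smoothNumbers hℓ)
    _ ≤ (Finset.range N).card := Finset.card_filter_le _ _
    _ = N := Finset.card_range N

section Eratosthenes

variable {F : ℕ → ℂ} {C ε : ℝ}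

lemma nonneg_of_norm_le_mul_rpow (hF : ∀ n : ℕ, 0 < n → ‖F n‖ ≤ C * (n : ℝ) ^ ε) : 0 ≤ C := by
  simpa using (norm_nonneg _).trans (hF 1 one_pos)

lemma norm_era_le_sum_divisors (hF : ∀ n : ℕ, 0 < n → ‖F n‖ ≤ C * (n : ℝ) ^ ε) (hε : 0 ≤ ε)
    {d : ℕ} (hd : d ≠ 0) :
    ‖era F d‖ ≤ C * (d : ℝ) ^ (2 * ε) * ∑ t ∈ d.divisors, (t : ℝ) ^ (-ε) := by
  have hC := nonneg_of_norm_le_mul_rpow hF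
  rw [era, Finset.mul_sum]
  refine (norm_sum_le _ _).trans (Finset.sum_le_sum fun t ht => ?_)
  obtain ⟨htd, -⟩ := Nat.mem_divisors.mp ht
  have ht : (0 : ℝ) < t := by exact_mod_cast Nat.pos_of_mem_divisors ht
  have hmu : ‖((moebius (d / t) : ℤ) : ℂ)‖ ≤ 1 := by
    rw [Complex.norm_intCast]
    exact_mod_cast abs_moebius_le_one
  calc ‖F t * ((moebius (d / t) : ℤ) : ℂ)‖ ≤ C * (t : ℝ) ^ ε := by
        rw [norm_mul]
        exact (mul_le_of_le_one_right (norm_nonneg _) hmu).trans (hF t (by exact_mod_cast ht))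
    _ = C * ((t : ℝ) ^ (2 * ε) * (t : ℝ) ^ (-ε)) := by
        rw [← Real.rpow_add ht]
        ring_nf
    _ ≤ C * ((d : ℝ) ^ (2 * ε) * (t : ℝ) ^ (-ε)) := by
        gcongr
        exact_mod_cast Nat.le_of_dvd (Nat.pos_of_ne_zero hd) htd
    _ = C * (d : ℝ) ^ (2 * ε) * (t : ℝ) ^ (-ε) := by ring

lemma norm_era_div_le_of_mem_smoothNumbers
    (hF : ∀ n : ℕ, 0 < n → ‖F n‖ ≤ C * (n : ℝ) ^ ε) (hε : 0 < ε) {N d : ℕ}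
    (hd : d ∈ N.smoothNumbers) :
    ‖era F d / d‖ ≤ C * (∑' m : N.smoothNumbers, (m : ℝ) ^ (-ε)) * (d : ℝ) ^ (2 * ε - 1) := by
  have hC := nonneg_of_norm_le_mul_rpow hF
  have hd0 : (0 : ℝ) < d := by
    exact_mod_cast Nat.pos_of_ne_zero (Nat.ne_zero_of_mem_smoothNumbers hd)
  rw [norm_div, Complex.norm_natCast, Real.rpow_sub_one hd0.ne', ← mul_div_assoc]
  gcongr
  calc ‖era F d‖ ≤ C * (d : ℝ) ^ (2 * ε) * ∑ t ∈ d.divisors, (t : ℝ) ^ (-ε) :=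
        norm_era_le_sum_divisors hF hε.le (Nat.ne_zero_of_mem_smoothNumbers hd)
    _ ≤ C * (d : ℝ) ^ (2 * ε) * ∑' m : N.smoothNumbers, (m : ℝ) ^ (-ε) := by
        gcongr
        exact sum_divisors_rpow_neg_le_tsum_smoothNumbers hd hε
    _ = C * (∑' m : N.smoothNumbers, (m : ℝ) ^ (-ε)) * (d : ℝ) ^ (2 * ε) := by ring

end Eratosthenes

lemma norm_tsum_le_of_subset_smoothNumbers {g : ℕ → ℂ} {K σ τ : ℝ} {N ℓ : ℕ} {s : Set ℕ}
    (hs : s ⊆ N.smoothNumbers) (hσ : 0 < σ) (hτ : 0 ≤ τ) (hK : 0 ≤ K) (hℓ : 0 < ℓ)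
    (hℓs : ∀ d ∈ s, ℓ ≤ d) (hg : ∀ d ∈ s, ‖g d‖ ≤ K * (d : ℝ) ^ (-(σ + τ))) :
    ‖∑' d : s, g d‖ ≤ K * (∑' m : N.smoothNumbers, (m : ℝ) ^ (-σ)) * (ℓ : ℝ) ^ (-τ) := by
  have hℓ' : (0 : ℝ) < ℓ := by exact_mod_cast hℓ
  have hsplit (d : s) : ‖g d‖ ≤ K * (ℓ : ℝ) ^ (-τ) * (d : ℝ) ^ (-σ) := by
    have hd : (ℓ : ℝ) ≤ d := by exact_mod_cast hℓs d d.2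
    calc ‖g d‖ ≤ K * ((d : ℝ) ^ (-τ) * (d : ℝ) ^ (-σ)) := by
          rw [← Real.rpow_add (hℓ'.trans_le hd), add_comm (-τ), ← neg_add]
          exact hg d d.2
      _ ≤ K * ((ℓ : ℝ) ^ (-τ) * (d : ℝ) ^ (-σ)) := by
          gcongr K * (?_ * _)
          exact Real.rpow_le_rpow_of_nonpos hℓ' hd (neg_nonpos.mpr hτ)
      _ = K * (ℓ : ℝ) ^ (-τ) * (d : ℝ) ^ (-σ) := by ring
  calc ‖∑' d : s, g d‖ ≤ ∑' d : s, K * (ℓ : ℝ) ^ (-τ) * (d : ℝ) ^ (-σ) :=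
        tsum_of_norm_bounded
          ((summable_rpow_neg_of_subset_smoothNumbers hs hσ).mul_left _).hasSum hsplit
    _ = K * (ℓ : ℝ) ^ (-τ) * ∑' d : s, (d : ℝ) ^ (-σ) := tsum_mul_left
    _ ≤ K * (ℓ : ℝ) ^ (-τ) * ∑' m : N.smoothNumbers, (m : ℝ) ^ (-σ) := by
        gcongr
        exact tsum_rpow_neg_le_of_subset_smoothNumbers hs hσ
    _ = K * (∑' m : N.smoothNumbers, (m : ℝ) ^ (-σ)) * (ℓ : ℝ) ^ (-τ) := by ring

theorem dual_delange_general (F : ℕ → ℂ)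
    (hF : ∀ ε : ℝ, 0 < ε → ∃ C : ℝ, ∀ n : ℕ, 0 < n → ‖F n‖ ≤ C * (n : ℝ) ^ ε)
    (V : ℕ) :
    Summable (fun ℓ : ℕ => (2 : ℝ) ^ ℓ.primeFactors.card *
      ‖∑' d : {d : ℕ // 0 < d ∧ QSmooth V d ∧ ℓ ∣ d}, era F d / (d : ℂ)‖) := by
  obtain ⟨C, hC⟩ := hF (1 / 8) (by norm_num)
  set S := (V + 1).smoothNumbers
  set K := C * ∑' m : S, (m : ℝ) ^ (-(1 / 8 : ℝ))
  have hK : 0 ≤ K :=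
    mul_nonneg (nonneg_of_norm_le_mul_rpow hC) (tsum_nonneg fun _ => by positivity)
  have hbound : Summable (S.indicator fun n : ℕ => (n : ℝ) ^ (-(1 / 4 : ℝ))) :=
    summable_subtype_iff_indicator.mp (summable_rpow_neg_smoothNumbers _ (by norm_num))
  refine Summable.of_nonneg_of_le (fun ℓ => by positivity) (fun ℓ => ?_)
    (hbound.mul_left (2 ^ (V + 1) * (K * ∑' m : S, (m : ℝ) ^ (-(1 / 2 : ℝ)))))
  by_cases hℓ : ℓ ∈ S
  · have hsub : {d : ℕ | 0 < d ∧ QSmooth V d ∧ ℓ ∣ d} ⊆ S :=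
      fun d hd => mem_smoothNumbers_succ_iff.mpr ⟨hd.1, hd.2.1⟩
    rw [Set.indicator_of_mem hℓ, mul_assoc]
    gcongr
    · exact one_le_two
    · exact card_primeFactors_le_of_mem_smoothNumbers hℓ
    · refine norm_tsum_le_of_subset_smoothNumbers (g := fun d => era F d / d) hsub
        (by norm_num) (by norm_num) hK (mem_smoothNumbers_succ_iff.mp hℓ).1
        (fun d hd => Nat.le_of_dvd hd.1 hd.2.2) fun d hd => ?_
      exact (norm_era_div_le_of_mem_smoothNumbers hC (by norm_num) (hsub hd)).trans_eq
        (by rw [show 2 * (1 / 8 : ℝ) - 1 = -(1 / 2 + 1 / 4) by norm_num])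
  · have : IsEmpty {d : ℕ // 0 < d ∧ QSmooth V d ∧ ℓ ∣ d} := ⟨fun d => hℓ <|
      Nat.mem_smoothNumbers_of_dvd (mem_smoothNumbers_succ_iff.mpr ⟨d.2.1, d.2.2.1⟩) d.2.2.2⟩
    simp [Set.indicator_of_notMem hℓ]

/-- Dual Delange condition `∑_ℓ 2^{ω(ℓ)} |R(ℓ)| < ∞` for the Wintner coefficients
`R(ℓ) = ∑_{d V-smooth, ℓ ∣ d} F'(d)/d`. -/
theorem dual_delange (F : ℕ → ℂ)
    (hF : ∀ ε : ℝ, 0 < ε → ∃ C : ℝ, ∀ n : ℕ, 0 < n → ‖F n‖ ≤ C * (n : ℝ) ^ ε)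
    (V : ℕ) (hV : 1 < V) :
    Summable (fun ℓ : ℕ => (2 : ℝ) ^ ℓ.primeFactors.card *
      ‖∑' d : {d : ℕ // 0 < d ∧ QSmooth V d ∧ ℓ ∣ d}, era F d / (d : ℂ)‖) :=
  dual_delange_general F hF V
end

section
/- Let f, g : ℕ → ℂ with g of range Q ≤ N, meaning g(m) = ∑_{d | m, d ≤ Q} g'(d) for all m, where g' = g ∗ μ. Define the correlation C_{f,g}(N,a) = ∑_{n ≤ N} f(n) g(n+a). Then C_{f,g}(N,a) = ∑_{q ≤ Q} ĝ(q) ∑_{n ≤ N} f(n) c_q(n+a) for all a ∈ ℕ, where ĝ(q) = ∑_{d ≤ Q, q | d} g'(d)/d. -/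
open scoped BigOperators
open ArithmeticFunction

def indFun (m : ℕ) : ArithmeticFunction ℤ :=
  ⟨fun e => if e ∣ m then (e : ℤ) else 0, by simp⟩

lemma ram_eq (q m : ℕ) (hq : 0 < q) (hm : 0 < m) :
    ramanujanSum q m = (indFun m * (moebius : ArithmeticFunction ℤ)) q := by
  rw [ArithmeticFunction.mul_apply, Nat.sum_divisorsAntidiagonal
    (fun x y => indFun m x * moebius y)]
  unfold ramanujanSum
  have hset : (Nat.gcd q m).divisors = q.divisors.filter (fun d => d ∣ m) := by
    ext d
    simp [Nat.mem_divisors, Nat.dvd_gcd_iff, Nat.gcd_eq_zero_iff, hq.ne', hm.ne', and_assoc]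
  rw [hset, Finset.sum_filter]
  refine Finset.sum_congr rfl fun d hd => ?_
  simp only [indFun, ArithmeticFunction.coe_mk]
  split_ifs <;> simp

lemma key (d m : ℕ) (hm : 0 < m) :
    (∑ q ∈ d.divisors, (ramanujanSum q m : ℤ)) = if d ∣ m then (d : ℤ) else 0 := by
  have h1 : ∀ q ∈ d.divisors, (ramanujanSum q m : ℤ) = (indFun m * (moebius : ArithmeticFunction ℤ)) q :=
    fun q hq => ram_eq q m (Nat.pos_of_mem_divisors hq) hm
  rw [Finset.sum_congr rfl h1, ← ArithmeticFunction.coe_mul_zeta_apply, mul_assoc,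
    moebius_mul_coe_zeta, mul_one]
  rfl

lemma keyC (d m : ℕ) (hm : 0 < m) :
    (∑ q ∈ d.divisors, (ramanujanSum q m : ℂ)) = if d ∣ m then (d : ℂ) else 0 := by
  have := key d m hm
  calc (∑ q ∈ d.divisors, (ramanujanSum q m : ℂ))
      = ((∑ q ∈ d.divisors, (ramanujanSum q m : ℤ) : ℤ) : ℂ) := by push_cast; ring
    _ = _ := by rw [this]; split_ifs <;> simp

/-- Proposition 1(i): if `g` has range `Q ≤ N`, then
`C_{f,g}(N,a) = ∑_{q ≤ Q} ĝ(q) ∑_{n ≤ N} f(n) c_q(n+a)`. -/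
theorem correlation_finite_ramanujan_expansion (f g : ℕ → ℂ) (Q N : ℕ) (hQN : Q ≤ N)
    (hg : ∀ m : ℕ, 0 < m → g m = ∑ d ∈ m.divisors.filter (fun d => d ≤ Q), era g d)
    (a : ℕ) (ha : 0 < a) :
    ∑ n ∈ Finset.Icc 1 N, f n * g (n + a) =
      ∑ q ∈ Finset.Icc 1 Q,
        (∑ d ∈ (Finset.Icc 1 Q).filter (fun d => q ∣ d), era g d / (d : ℂ)) *
          ∑ n ∈ Finset.Icc 1 N, f n * (ramanujanSum q (n + a) : ℂ) := by
  have step1 : ∀ n ∈ Finset.Icc 1 N, f n * g (n + a) =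
      ∑ d ∈ Finset.Icc 1 Q, ∑ q ∈ Finset.Icc 1 Q,
        if q ∣ d then f n * ((era g d / d) * (ramanujanSum q (n + a) : ℂ)) else 0 := by
    intro n hn
    have hna : 0 < n + a := by omega
    rw [hg (n + a) hna]
    have hset : (n + a).divisors.filter (fun d => d ≤ Q)
        = (Finset.Icc 1 Q).filter (fun d => d ∣ n + a) := by
      ext d
      simp only [Finset.mem_filter, Nat.mem_divisors, Finset.mem_Icc]
      constructor
      · rintro ⟨⟨h1, h2⟩, h3⟩
        exact ⟨⟨Nat.pos_of_dvd_of_pos h1 hna, h3⟩, h1⟩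
      · rintro ⟨⟨h1, h2⟩, h3⟩
        exact ⟨⟨h3, hna.ne'⟩, h2⟩
    rw [hset, Finset.sum_filter, Finset.mul_sum]
    refine Finset.sum_congr rfl fun d hd => ?_
    simp only [Finset.mem_Icc] at hd
    have hd0 : (d : ℂ) ≠ 0 := by exact_mod_cast (by omega : d ≠ 0)
    have hdiv : d.divisors = (Finset.Icc 1 Q).filter (fun q => q ∣ d) := by
      ext q
      simp only [Nat.mem_divisors, Finset.mem_filter, Finset.mem_Icc]
      constructor
      · rintro ⟨h1, h2⟩
        exact ⟨⟨Nat.pos_of_dvd_of_pos h1 (by omega), le_trans (Nat.le_of_dvd (by omega) h1) hd.2⟩, h1⟩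
      · rintro ⟨h1, h2⟩
        exact ⟨h2, by omega⟩
    have hk := keyC d (n + a) hna
    rw [hdiv, Finset.sum_filter] at hk
    have : (if d ∣ n + a then era g d else 0) =
        (era g d / d) * ∑ q ∈ Finset.Icc 1 Q, (if q ∣ d then (ramanujanSum q (n + a) : ℂ) else 0) := by
      rw [hk]
      split_ifs with h
      · field_simp
      · simp
    rw [this, Finset.mul_sum, Finset.mul_sum]
    refine Finset.sum_congr rfl fun q hq => ?_
    split_ifs <;> ring
  rw [Finset.sum_congr rfl step1]
  rw [Finset.sum_comm]
  rw [Finset.sum_congr rfl (fun (d : ℕ) (_ : d ∈ Finset.Icc 1 Q) =>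
    Finset.sum_comm (s := Finset.Icc 1 N) (t := Finset.Icc 1 Q)
      (f := fun n q => if q ∣ d then f n * (era g d / ↑d * ↑(ramanujanSum q (n + a))) else 0))]
  rw [Finset.sum_comm]
  refine Finset.sum_congr rfl fun q hq => ?_
  rw [Finset.sum_filter, Finset.sum_mul]
  refine Finset.sum_congr rfl fun d hd => ?_
  rw [Finset.mul_sum]
  refine Finset.sum_congr rfl fun n hn => ?_
  split_ifs <;> ring
end

section
/- Let f, g : ℕ → ℂ with g of range Q (g(m) = ∑_{d|m, d ≤ Q} g'(d)) and N ∈ ℕ fixed. Then a ↦ C_{f,g}(N,a) = ∑_{n ≤ N} f(n) g(n+a) is a periodic function of a with period dividing lcm(2,3,…,Q); in particular it is bounded in a. -/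
open scoped BigOperators
open ArithmeticFunction

/-!
A function of range `Q` is a sum over the divisors `d ≤ Q` of its argument, and every such `d`
divides `L = lcm(1,…,Q)`; so `d ∣ m ↔ d ∣ m + L`, which makes `g` periodic with period `L` on
the positive integers. Each term `f n * g (n + a)` of the correlation has `n ≥ 1`, so the
correlation is `L`-periodic in `a`, and a periodic function on `ℕ` takes only the finitely many
values `C(0), …, C(L - 1)`.
-/

open Finset

theorem Nat.filter_divisors_add_of_forall_dvd {m L Q : ℕ} (hm : m ≠ 0)
    (hL : ∀ d ∈ Icc 1 Q, d ∣ L) :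
    (m + L).divisors.filter (· ≤ Q) = m.divisors.filter (· ≤ Q) := by
  ext d
  simp only [mem_filter, Nat.mem_divisors, and_congr_left_iff]
  intro hdQ
  have hdL : d ≠ 0 → d ∣ L := fun hd => hL d (mem_Icc.2 ⟨Nat.one_le_iff_ne_zero.2 hd, hdQ⟩)
  constructor
  · rintro ⟨hdvd, -⟩
    exact ⟨(Nat.dvd_add_left (hdL (ne_zero_of_dvd_ne_zero (by omega) hdvd))).1 hdvd, hm⟩
  · rintro ⟨hdvd, -⟩
    exact ⟨dvd_add hdvd (hdL (ne_zero_of_dvd_ne_zero hm hdvd)), by omega⟩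

theorem add_eq_of_eq_sum_filter_divisors {M : Type*} [AddCommMonoid M] {g h : ℕ → M} {Q L : ℕ}
    (hg : ∀ m : ℕ, 0 < m → g m = ∑ d ∈ m.divisors.filter (· ≤ Q), h d)
    (hL : ∀ d ∈ Icc 1 Q, d ∣ L) {m : ℕ} (hm : 0 < m) :
    g (m + L) = g m := by
  rw [hg m hm, hg (m + L) (by omega), Nat.filter_divisors_add_of_forall_dvd hm.ne' hL]

theorem periodic_sum_Icc_mul_add {R : Type*} [NonUnitalNonAssocSemiring R] (f g : ℕ → R)
    (N L : ℕ) (hg : ∀ m : ℕ, 0 < m → g (m + L) = g m) :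
    Function.Periodic (fun a : ℕ => ∑ n ∈ Icc 1 N, f n * g (n + a)) L := by
  intro a
  refine sum_congr rfl fun n hn => ?_
  rw [← add_assoc, hg (n + a) (by grind)]

theorem Function.Periodic.exists_norm_le_nat {E : Type*} [SeminormedAddGroup E] {u : ℕ → E}
    {c : ℕ} (hu : Function.Periodic u c) (hc : 0 < c) :
    ∃ B : ℝ, ∀ a : ℕ, ‖u a‖ ≤ B :=
  ⟨∑ b ∈ range c, ‖u b‖, fun a => hu.map_mod_nat a ▸
    single_le_sum (fun _ _ => norm_nonneg _) (mem_range.2 (Nat.mod_lt a hc))⟩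

/-- Proposition 1(ii): if `g` has range `Q`, then `a ↦ C_{f,g}(N,a)` is periodic
with period dividing `lcm(2,…,Q)`, and in particular bounded. -/
theorem correlation_periodic_bounded (f g : ℕ → ℂ) (Q N : ℕ)
    (hg : ∀ m : ℕ, 0 < m → g m = ∑ d ∈ m.divisors.filter (fun d => d ≤ Q), era g d) :
    Function.Periodic (fun a : ℕ => ∑ n ∈ Finset.Icc 1 N, f n * g (n + a))
        ((Finset.Icc 1 Q).lcm (fun n => n)) ∧
      ∃ B : ℝ, ∀ a : ℕ, 0 < a →
        ‖∑ n ∈ Finset.Icc 1 N, f n * g (n + a)‖ ≤ B := by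
  have hper := periodic_sum_Icc_mul_add f g N _
    fun m hm => add_eq_of_eq_sum_filter_divisors hg (fun d hd => dvd_lcm hd) hm
  obtain ⟨B, hB⟩ := hper.exists_norm_le_nat (Nat.lcmUpto_pos Q)
  exact ⟨hper, B, fun a _ => hB a⟩
end

section
/- Fix N, Q ∈ ℕ, integers 1 ≤ n₀ ≤ N and 2 < q₀ ≤ Q with n₀ ≡ −1 (mod q₀). Let f = 1_{{n₀}} and g = c_{q₀} (so g has range Q). Then at a = 1: C_{f,g}(N,1) = c_{q₀}(n₀+1) = φ(q₀), while ∑_{ℓ ≤ Q} (ĝ(ℓ)/φ(ℓ)) (∑_{n ≤ N} f(n) c_ℓ(n)) c_ℓ(1) = μ(q₀)²/φ(q₀); since φ(q₀) ≠ μ(q₀)²/φ(q₀) for q₀ > 2, the (Q)-Reef identity fails. -/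
open scoped BigOperators
open ArithmeticFunction

/-! The indicator `f` and the coefficient vector `ĝ = 1_{q₀}` collapse both sums to one term.
Since `q₀ ∣ n₀ + 1`, the correlation sees `c_{q₀}(n₀ + 1) = φ(q₀)`, whereas `n₀` and `1` are
coprime to `q₀`, so the Reef side sees `c_{q₀}(n₀) c_{q₀}(1) / φ(q₀) = μ(q₀)² / φ(q₀)`. The two differ
because `φ(q₀)` is even and positive for `q₀ > 2`, so `φ(q₀)² ≥ 4 > 1 ≥ μ(q₀)²`. -/

open scoped ArithmeticFunction.Moebius

lemma totient_eq_sum_divisors_mul_moebius (q : ℕ) :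
    (q.totient : ℤ) = ∑ d ∈ q.divisors, (d : ℤ) * μ (q / d) := by
  rcases q.eq_zero_or_pos with rfl | hq
  · simp
  have inversion := (sum_eq_iff_sum_mul_moebius_eq (R := ℤ) (f := fun n => (n.totient : ℤ))
    (g := fun n => (n : ℤ))).mp (fun n _ => mod_cast Nat.sum_totient n) q hq
  simp only [Int.cast_id] at inversion
  rw [← inversion, Nat.sum_divisorsAntidiagonal' (f := fun x y => (μ x : ℤ) * y)]
  exact Finset.sum_congr rfl fun d _ => by simp [mul_comm]

lemma ramanujanSum_of_dvd {q m : ℕ} (h : q ∣ m) : ramanujanSum q m = q.totient := by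
  rw [ramanujanSum, Nat.gcd_eq_left h, totient_eq_sum_divisors_mul_moebius]

lemma ramanujanSum_of_coprime {q m : ℕ} (h : q.Coprime m) : ramanujanSum q m = μ q := by
  simp [ramanujanSum, Nat.Coprime.gcd_eq_one h]

lemma Nat.coprime_of_dvd_add_one {q n : ℕ} (h : q ∣ n + 1) : q.Coprime n :=
  (Nat.coprime_self_add_left.mpr (Nat.coprime_one_left n)).coprime_dvd_left h

lemma moebius_sq_lt_totient_sq {q : ℕ} (hq : 2 < q) : μ q ^ 2 < (q.totient : ℤ) ^ 2 := by
  have two_le_totient : 2 ≤ q.totient := by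
    obtain ⟨k, hk⟩ := Nat.totient_even hq
    have := Nat.totient_pos.mpr (by omega : 0 < q)
    omega
  have : μ q ^ 2 ≤ 1 := by
    simpa using pow_le_one₀ (n := 2) (abs_nonneg _) (abs_moebius_le_one (n := q))
  nlinarith [(show (2 : ℤ) ≤ q.totient by exact_mod_cast two_le_totient)]

lemma totient_ne_moebius_sq_div_totient {q : ℕ} (hq : 2 < q) :
    (q.totient : ℂ) ≠ (μ q : ℂ) ^ 2 / q.totient := by
  have totient_ne_zero : (q.totient : ℂ) ≠ 0 := by
    exact_mod_cast (Nat.totient_pos.mpr (by omega : 0 < q)).ne'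
  rw [ne_eq, eq_div_iff totient_ne_zero, ← sq]
  exact_mod_cast (moebius_sq_lt_totient_sq hq).ne'

/-- Counterexample 1: with `f = 1_{{n₀}}`, `g = c_{q₀}`, `n₀ ≡ −1 (mod q₀)`, at
`a = 1` the correlation equals `φ(q₀)` while the (Q)-Reef right-hand side equals
`μ(q₀)²/φ(q₀)`, and these differ for `q₀ > 2`. -/
theorem reef_counterexample (N Q n₀ q₀ : ℕ)
    (hn₀ : 1 ≤ n₀) (hn₀N : n₀ ≤ N) (hq₀ : 2 < q₀) (hq₀Q : q₀ ≤ Q)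
    (hcong : q₀ ∣ n₀ + 1)
    (f : ℕ → ℂ) (hf : f = fun n => if n = n₀ then 1 else 0)
    (g : ℕ → ℂ) (hg : g = fun m => (ramanujanSum q₀ m : ℂ))
    (ghat : ℕ → ℂ) (hghat : ghat = fun ℓ => if ℓ = q₀ then 1 else 0) :
    (∑ n ∈ Finset.Icc 1 N, f n * g (n + 1)) = (Nat.totient q₀ : ℂ) ∧
    (∑ ℓ ∈ Finset.Icc 1 Q,
        (ghat ℓ / (Nat.totient ℓ : ℂ)) *
          (∑ n ∈ Finset.Icc 1 N, f n * (ramanujanSum ℓ n : ℂ)) *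
          (ramanujanSum ℓ 1 : ℂ)) =
      ((moebius q₀ : ℂ)) ^ 2 / (Nat.totient q₀ : ℂ) ∧
    (Nat.totient q₀ : ℂ) ≠ ((moebius q₀ : ℂ)) ^ 2 / (Nat.totient q₀ : ℂ) := by
  have hn₀_mem : n₀ ∈ Finset.Icc 1 N := Finset.mem_Icc.mpr ⟨hn₀, hn₀N⟩
  have hq₀_mem : q₀ ∈ Finset.Icc 1 Q := Finset.mem_Icc.mpr ⟨by omega, hq₀Q⟩
  have c_at_n₀ : ramanujanSum q₀ n₀ = μ q₀ :=
    ramanujanSum_of_coprime (Nat.coprime_of_dvd_add_one hcong)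
  have c_at_one : ramanujanSum q₀ 1 = μ q₀ := ramanujanSum_of_coprime (Nat.coprime_one_right q₀)
  subst hf hg hghat
  refine ⟨?_, ?_, totient_ne_moebius_sq_div_totient hq₀⟩
  · simp [ite_mul, hn₀_mem, ramanujanSum_of_dvd hcong]
  · simp [ite_mul, ite_div, hn₀_mem, hq₀_mem, c_at_n₀, c_at_one]
    ring
end
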